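/- arXiv:1005.5520 — 11 statements merged into one kernel-verified Lean document; each statement's English description precedes it below -/
import Mathlib

section
/- For the discrete interval hypergraph H_n on vertex set {1,...,n} whose hyperedges are all discrete intervals [s,t] with 1 ≤ s ≤ t ≤ n, the conflict-free chromatic number equals ⌊log₂ n⌋ + 1. -/
/-!
Colouring `i` by its 2-adic valuation is conflict-free: two points `2^k b < 2^k c` (`b`, `c` odd)
of an interval with the same maximal valuation would enclose `2^k (b + 1)`, of larger valuation.
On `[1, n]` this uses `⌊log₂ n⌋ + 1` colours. Conversely, the point of `[1, n]` with a unique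
colour splits it into two sides; the longer one has length at least `⌊n / 2⌋`, misses that colour
and is again conflict-free, so induction on the length gives at least `⌊log₂ n⌋ + 1` colours.
-/

open Finset

def ConflictFreeOn {α : Type*} (C : ℕ → α) (a b : ℕ) : Prop :=
  ∀ s t : ℕ, a ≤ s → s ≤ t → t ≤ b → ∃ v ∈ Icc s t, ∀ u ∈ Icc s t, u ≠ v → C u ≠ C v

namespace ConflictFreeOn

variable {α β : Type*} {C : ℕ → α} {a b : ℕ}

theorem mono (hC : ConflictFreeOn C a b) {a' b' : ℕ} (ha : a ≤ a') (hb : b' ≤ b) :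
    ConflictFreeOn C a' b' :=
  fun s t hs hst ht => hC s t (ha.trans hs) hst (ht.trans hb)

theorem comp (hC : ConflictFreeOn C a b) {f : α → β} (hf : Function.Injective f) :
    ConflictFreeOn (f ∘ C) a b := by
  intro s t hs hst ht
  obtain ⟨v, hv, huniq⟩ := hC s t hs hst ht
  exact ⟨v, hv, fun u hu huv => hf.ne (huniq u hu huv)⟩

end ConflictFreeOn

theorem card_image_lt_card_image_of_unique {α : Type*} [DecidableEq α] {C : ℕ → α}
    {I J : Finset ℕ} {v : ℕ} (hv : v ∈ I) (huniq : ∀ u ∈ I, u ≠ v → C u ≠ C v)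
    (hJI : J ⊆ I) (hvJ : v ∉ J) : (J.image C).card < (I.image C).card := by
  refine card_lt_card ⟨image_subset_image hJI, fun h => ?_⟩
  obtain ⟨u, hu, hCu⟩ := mem_image.mp (h (mem_image_of_mem C hv))
  exact huniq u (hJI hu) (ne_of_mem_of_not_mem hu hvJ) hCu

theorem ConflictFreeOn.log_add_one_le_card_image {α : Type*} [DecidableEq α] {C : ℕ → α}
    {a b : ℕ} (hC : ConflictFreeOn C a b) (hab : a ≤ b) :
    Nat.log 2 (b + 1 - a) + 1 ≤ ((Icc a b).image C).card := by
  induction hn : b + 1 - a using Nat.strong_induction_on generalizing a b with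
  | _ n ih =>
  obtain ⟨v, hv, huniq⟩ := hC a b le_rfl hab le_rfl
  have hvab := mem_Icc.mp hv
  rcases Nat.lt_or_ge n 2 with hn2 | hn2
  · rw [Nat.log_of_lt hn2]
    exact card_pos.mpr ((nonempty_Icc.mpr hab).image C)
  obtain ⟨a', b', ha', hab', hb', hvJ, hlen, hlen'⟩ : ∃ a' b', a ≤ a' ∧ a' ≤ b' ∧ b' ≤ b ∧
      v ∉ Icc a' b' ∧ n / 2 ≤ b' + 1 - a' ∧ b' + 1 - a' < n := by
    rcases le_total (b - v) (v - a) with h | h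
    · exact ⟨a, v - 1, le_rfl, by omega, by omega, by rw [mem_Icc]; omega, by omega, by omega⟩
    · exact ⟨v + 1, b, by omega, by omega, le_rfl, by rw [mem_Icc]; omega, by omega, by omega⟩
  calc Nat.log 2 n + 1 = Nat.log 2 (n / 2) + 1 + 1 := by
        rw [Nat.log_div_base, Nat.sub_add_cancel (Nat.log_pos (by norm_num) hn2)]
    _ ≤ Nat.log 2 (b' + 1 - a') + 1 + 1 := by gcongr
    _ ≤ ((Icc a' b').image C).card + 1 :=
        Nat.add_le_add_right (ih _ hlen' (hC.mono ha' hb') hab' rfl) 1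
    _ ≤ ((Icc a b).image C).card :=
        card_image_lt_card_image_of_unique hv huniq (Icc_subset_Icc ha' hb') hvJ

theorem exists_two_pow_succ_dvd_between (k : ℕ) {b c : ℕ} (hb : Odd b) (hc : Odd c)
    (hbc : b < c) : ∃ w, 2 ^ k * b < w ∧ w < 2 ^ k * c ∧ 2 ^ (k + 1) ∣ w := by
  obtain ⟨m, rfl⟩ := hb
  refine ⟨2 ^ k * (2 * m + 2), ?_, ?_, ⟨m + 1, by ring⟩⟩
  · exact Nat.mul_lt_mul_of_pos_left (by omega) (by positivity)
  · obtain ⟨l, rfl⟩ := hc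
    exact Nat.mul_lt_mul_of_pos_left (by omega) (by positivity)

theorem exists_padicValNat_two_lt_between {u v : ℕ} (hu : u ≠ 0) (huv : u < v)
    (h : padicValNat 2 u = padicValNat 2 v) :
    ∃ w, u < w ∧ w < v ∧ padicValNat 2 u < padicValNat 2 w := by
  obtain ⟨k, b, hb, rfl⟩ := Nat.exists_eq_two_pow_mul_odd hu
  obtain ⟨l, c, hc, rfl⟩ := Nat.exists_eq_two_pow_mul_odd (by omega : v ≠ 0)
  have hval : ∀ j m, Odd m → padicValNat 2 (2 ^ j * m) = j := fun j m hm => by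
    rw [padicValNat.mul (by positivity) (by rintro rfl; simp at hm), padicValNat.prime_pow,
      padicValNat.eq_zero_of_not_dvd hm.not_two_dvd_nat, add_zero]
  rw [hval k b hb, hval l c hc] at h
  subst h
  obtain ⟨w, hbw, hwc, hdvd⟩ := exists_two_pow_succ_dvd_between k hb hc
    (Nat.lt_of_mul_lt_mul_left huv)
  refine ⟨w, hbw, hwc, ?_⟩
  rw [hval k b hb]
  exact (padicValNat_dvd_iff_le (by omega)).mp hdvd

theorem conflictFreeOn_padicValNat_two (n : ℕ) : ConflictFreeOn (padicValNat 2) 1 n := by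
  intro s t hs hst _
  obtain ⟨v, hv, hmax⟩ := exists_max_image (Icc s t) (padicValNat 2) (nonempty_Icc.mpr hst)
  refine ⟨v, hv, fun u hu huv heq => ?_⟩
  have hu' := mem_Icc.mp hu
  have hv' := mem_Icc.mp hv
  obtain ⟨w, hw₁, hw₂, hw⟩ : ∃ w, min u v < w ∧ w < max u v ∧
      padicValNat 2 v < padicValNat 2 w := by
    rcases huv.lt_or_gt with h | h
    · simpa [min_eq_left h.le, max_eq_right h.le, heq] using
        exists_padicValNat_two_lt_between (by omega) h heq
    · simpa [min_eq_right h.le, max_eq_left h.le] using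
        exists_padicValNat_two_lt_between (by omega) h heq.symm
  exact (hmax w (mem_Icc.mpr ⟨by omega, by omega⟩)).not_gt hw

/-- The conflict-free chromatic number of the discrete interval hypergraph `H_n`
(vertices `{1,…,n}`, hyperedges all intervals `[s,t]`) equals `⌊log₂ n⌋ + 1`. -/
theorem cf_chromatic_discrete_interval (n : ℕ) (hn : 1 ≤ n) :
    IsLeast {k : ℕ | ∃ C : ℕ → ℕ,
        (∀ i ∈ Finset.Icc 1 n, C i ∈ Finset.Icc 1 k) ∧
        ∀ s t : ℕ, 1 ≤ s → s ≤ t → t ≤ n →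
          ∃ v ∈ Finset.Icc s t, ∀ u ∈ Finset.Icc s t, u ≠ v → C u ≠ C v}
      (Nat.log 2 n + 1) := by
  constructor
  · refine ⟨fun i => padicValNat 2 i + 1, fun i hi => ?_,
      (conflictFreeOn_padicValNat_two n).comp (add_left_injective 1)⟩
    have hval : padicValNat 2 i ≤ Nat.log 2 n :=
      (padicValNat_le_nat_log i).trans (Nat.log_mono_right (mem_Icc.mp hi).2)
    exact mem_Icc.mpr ⟨Nat.le_add_left 1 _, Nat.add_le_add_right hval 1⟩
  · rintro k ⟨C, hcol, hC⟩
    calc Nat.log 2 n + 1 = Nat.log 2 (n + 1 - 1) + 1 := by rw [Nat.add_sub_cancel]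
      _ ≤ ((Icc 1 n).image C).card := ConflictFreeOn.log_add_one_le_card_image hC hn
      _ ≤ (Icc 1 k).card := card_le_card (image_subset_iff.mpr hcol)
      _ = k := Nat.card_Icc 1 k
end

section
/- For every n ≥ 1, the discrete interval hypergraph H_n is (⌊log₂ n⌋ + 1)-conflict-free-choosable: for any assignment of lists L_i of positive integers with |L_i| ≥ ⌊log₂ n⌋ + 1 to each vertex i ∈ [n], there is a conflict-free coloring of H_n assigning each vertex a color from its own list. -/
/-!
Induction on `k`: an interval of fewer than `2 ^ (k + 1)` vertices with lists of size at least
`k + 1` is coloured by giving its middle vertex `m` some colour `c` from its list, deleting `c`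
from all other lists, and colouring the two halves (each of fewer than `2 ^ k` vertices)
recursively. A subinterval inside one half has a unique colour there, and one containing `m`
has `c` exactly once.
-/

open Finset

section

variable {α β : Type*}

def HasUniqueColor (C : β → α) (S : Finset β) : Prop :=
  ∃ v ∈ S, ∀ u ∈ S, u ≠ v → C u ≠ C v

theorem HasUniqueColor.congr {C C' : β → α} {S : Finset β} (h : HasUniqueColor C S)
    (hCC' : ∀ i ∈ S, C i = C' i) : HasUniqueColor C' S := by
  obtain ⟨v, hv, huniq⟩ := h
  refine ⟨v, hv, fun u hu huv => ?_⟩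
  rw [← hCC' u hu, ← hCC' v hv]
  exact huniq u hu huv

def IsConflictFreeOn (C : ℕ → α) (a b : ℕ) : Prop :=
  ∀ s t, a ≤ s → s ≤ t → t < b → HasUniqueColor C (Icc s t)

theorem isConflictFreeOn_of_le {C : ℕ → α} {a b : ℕ} (hba : b ≤ a) : IsConflictFreeOn C a b :=
  fun _ _ has hst htb => absurd (has.trans_lt (hst.trans_lt htb)) (not_lt.mpr hba)

def glueAt (m : ℕ) (C₁ : ℕ → α) (c : α) (C₂ : ℕ → α) : ℕ → α :=
  fun i => if i < m then C₁ i else if i = m then c else C₂ i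

theorem IsConflictFreeOn.glueAt {C₁ C₂ : ℕ → α} {a m b : ℕ} {c : α}
    (h₁ : IsConflictFreeOn C₁ a m) (h₂ : IsConflictFreeOn C₂ (m + 1) b)
    (hc₁ : ∀ i ∈ Ico a m, C₁ i ≠ c) (hc₂ : ∀ i ∈ Ico (m + 1) b, C₂ i ≠ c) :
    IsConflictFreeOn (glueAt m C₁ c C₂) a b := by
  intro s t has hst htb
  rcases lt_or_ge t m with htm | hmt
  · refine (h₁ s t has hst htm).congr fun i hi => ?_
    have him : i < m := by simp only [mem_Icc] at hi; omega
    simp [_root_.glueAt, him]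
  rcases lt_or_ge m s with hms | hsm
  · refine (h₂ s t hms hst htb).congr fun i hi => ?_
    have him : m < i := by simp only [mem_Icc] at hi; omega
    simp [_root_.glueAt, him.not_gt, him.ne']
  refine ⟨m, mem_Icc.mpr ⟨hsm, hmt⟩, fun u hu hum => ?_⟩
  simp only [mem_Icc] at hu
  rcases hum.lt_or_gt with hlt | hgt
  · simpa [_root_.glueAt, hlt] using hc₁ u (mem_Ico.mpr ⟨by omega, hlt⟩)
  · simpa [_root_.glueAt, hgt.not_gt, hgt.ne'] using hc₂ u (mem_Ico.mpr ⟨hgt, by omega⟩)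

theorem exists_isConflictFreeOn_of_card_le [Nonempty α] [DecidableEq α] (k : ℕ) :
    ∀ (a b : ℕ) (L : ℕ → Finset α), b - a < 2 ^ k → (∀ i ∈ Ico a b, k ≤ #(L i)) →
      ∃ C : ℕ → α, (∀ i ∈ Ico a b, C i ∈ L i) ∧ IsConflictFreeOn C a b := by
  induction k with
  | zero =>
    intro a b L hlen _
    refine ⟨fun _ => Classical.arbitrary α, fun i hi => ?_, isConflictFreeOn_of_le (by omega)⟩
    simp only [mem_Ico] at hi
    omega
  | succ k ih =>
    intro a b L hlen hcard
    rcases le_or_gt b a with hba | hab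
    · refine ⟨fun _ => Classical.arbitrary α, fun i hi => ?_, isConflictFreeOn_of_le hba⟩
      simp only [mem_Ico] at hi
      omega
    set m := (a + b) / 2
    have hm : m ∈ Ico a b := mem_Ico.mpr ⟨by omega, by omega⟩
    obtain ⟨c, hc⟩ := card_pos.mp (Nat.succ_pos k |>.trans_le (hcard m hm))
    have hcard' : ∀ i ∈ Ico a b, k ≤ #((L i).erase c) := fun i hi =>
      (Nat.sub_le_sub_right (hcard i hi) 1).trans pred_card_le_card_erase
    have hpow : 2 ^ (k + 1) = 2 * 2 ^ k := by ring
    obtain ⟨C₁, hC₁L, hC₁⟩ := ih a m (fun i => (L i).erase c) (by omega)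
      fun i hi => hcard' i (Ico_subset_Ico_right (by omega) hi)
    obtain ⟨C₂, hC₂L, hC₂⟩ := ih (m + 1) b (fun i => (L i).erase c) (by omega)
      fun i hi => hcard' i (Ico_subset_Ico_left (by omega) hi)
    refine ⟨glueAt m C₁ c C₂, fun i hi => ?_,
      hC₁.glueAt hC₂ (fun i hi => ne_of_mem_erase (hC₁L i hi))
        (fun i hi => ne_of_mem_erase (hC₂L i hi))⟩
    simp only [mem_Ico] at hi
    unfold glueAt
    split_ifs with him him'
    · exact mem_of_mem_erase (hC₁L i (mem_Ico.mpr ⟨hi.1, him⟩))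
    · exact him' ▸ hc
    · exact mem_of_mem_erase (hC₂L i (mem_Ico.mpr ⟨by omega, hi.2⟩))

end

theorem cf_choosable_discrete_interval_general (n : ℕ) (L : ℕ → Finset ℕ)
    (hsize : ∀ i ∈ Finset.Icc 1 n, Nat.log 2 n + 1 ≤ (L i).card) :
    ∃ C : ℕ → ℕ, (∀ i ∈ Finset.Icc 1 n, C i ∈ L i) ∧
      ∀ s t : ℕ, 1 ≤ s → s ≤ t → t ≤ n →
        ∃ v ∈ Finset.Icc s t, ∀ u ∈ Finset.Icc s t, u ≠ v → C u ≠ C v := by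
  have hIco : Ico 1 (n + 1) = Icc 1 n := rfl
  have hlen : n + 1 - 1 < 2 ^ (Nat.log 2 n + 1) := Nat.lt_pow_succ_log_self one_lt_two n
  obtain ⟨C, hCL, hCcf⟩ :=
    exists_isConflictFreeOn_of_card_le _ 1 (n + 1) L hlen (hIco ▸ hsize)
  exact ⟨C, hIco ▸ hCL, fun s t hs hst htn => hCcf s t hs hst (Nat.lt_succ_of_le htn)⟩

/-- The discrete interval hypergraph `H_n` is `(⌊log₂ n⌋ + 1)`-conflict-free-choosable:
for any lists `L i` of positive integers of size at least `⌊log₂ n⌋ + 1`, there is a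
conflict-free coloring of `H_n` choosing each vertex's color from its own list. -/
theorem cf_choosable_discrete_interval (n : ℕ) (hn : 1 ≤ n) (L : ℕ → Finset ℕ)
    (hpos : ∀ i ∈ Finset.Icc 1 n, ∀ c ∈ L i, 0 < c)
    (hsize : ∀ i ∈ Finset.Icc 1 n, Nat.log 2 n + 1 ≤ (L i).card) :
    ∃ C : ℕ → ℕ, (∀ i ∈ Finset.Icc 1 n, C i ∈ L i) ∧
      ∀ s t : ℕ, 1 ≤ s → s ≤ t → t ≤ n →
        ∃ v ∈ Finset.Icc s t, ∀ u ∈ Finset.Icc s t, u ≠ v → C u ≠ C v :=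
  cf_choosable_discrete_interval_general n L hsize
end

section
/- Let H = (V, E) be a hypergraph that is hereditarily k-colorable (every induced sub-hypergraph admits a proper k-coloring), and set λ = k/(k−1). If L = {L_v} is a family of lists of positive integers with Σ_{v∈V} λ^{−|L_v|} < 1, then H admits a unique-maximum coloring from L. -/
/-!
Induct on the finite set of colors occurring in the lists. Let `m` be the smallest one and `U` the
set of vertices whose list contains `m`. Weigh each vertex by `λ^{-|L_v|}`; some color class `A` of
a proper `k`-coloring of `H[U]` carries at least a `1/k` share of the weight of `U`. Color `A` with
`m` and delete `m` from the remaining lists: this multiplies the weight of `U \ A` by `λ`, which is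
paid for by removing `A`, so the potential stays below `1` and the rest is colored recursively with
colors larger than `m`. A hyperedge that meets the remaining vertices only inside `A` meets them in
at most one vertex, since `A` is a color class of a proper coloring of `H[U]`.
-/

open Finset

namespace Hypergraph

variable {V α ι : Type*}

theorem exists_sum_le_card_mul_sum_fiber [Fintype ι] [Nonempty ι] [DecidableEq ι] (c : V → ι)
    (U : Finset V) (w : V → ℝ) :
    ∃ i, ∑ v ∈ U, w v ≤ Fintype.card ι * ∑ v ∈ U with c v = i, w v := by
  have hι : (0 : ℝ) < Fintype.card ι := by exact_mod_cast Fintype.card_pos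
  obtain ⟨i, -, hi⟩ := exists_le_sum_fiber_of_maps_to_of_nsmul_le_sum
    (b := (∑ v ∈ U, w v) / Fintype.card ι) (fun v _ => mem_univ (c v)) univ_nonempty
    (by rw [card_univ, nsmul_eq_mul, mul_div_cancel₀ _ hι.ne'])
  exact ⟨i, (div_le_iff₀' hι).mp hi⟩

noncomputable def potential (q : ℝ) (R : Finset V) (L : V → Finset α) : ℝ :=
  ∑ v ∈ R, q ^ (-((L v).card : ℤ))

section erase

variable [DecidableEq α] {q : ℝ} {s : Finset V} {L : V → Finset α} {m : α}

theorem potential_erase_of_forall_mem (hq : q ≠ 0) (h : ∀ v ∈ s, m ∈ L v) :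
    potential q s (fun v => (L v).erase m) = q * potential q s L := by
  rw [potential, potential, mul_sum]
  refine sum_congr rfl fun v hv => ?_
  have hpos : 0 < (L v).card := card_pos.2 ⟨m, h v hv⟩
  rw [card_erase_of_mem (h v hv), Nat.cast_sub hpos, ← zpow_one_add₀ hq]
  congr 1
  push_cast
  ring

theorem potential_erase_of_forall_notMem (h : ∀ v ∈ s, m ∉ L v) :
    potential q s (fun v => (L v).erase m) = potential q s L :=
  sum_congr rfl fun v hv => by simp only [erase_eq_of_notMem (h v hv)]

end erase

variable [DecidableEq V]

def IsProperColoringOn (E : Finset (Finset V)) (U : Finset V) (c : V → ι) : Prop :=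
  ∀ S ∈ E, 2 ≤ (S ∩ U).card → ∃ u ∈ S ∩ U, ∃ w ∈ S ∩ U, c u ≠ c w

def IsUniqueMaxColoringOn [LT α] (E : Finset (Finset V)) (R : Finset V) (C : V → α) : Prop :=
  ∀ S ∈ E, (S ∩ R).Nonempty → ∃ v ∈ S ∩ R, ∀ u ∈ S ∩ R, u ≠ v → C u < C v

theorem IsProperColoringOn.card_inter_le_one [DecidableEq ι] {E : Finset (Finset V)}
    {U R S : Finset V} {c : V → ι} {i : ι} (hc : IsProperColoringOn E U c) (hS : S ∈ E)
    (hSU : S ∩ R ⊆ U.filter (c · = i)) (hUR : U ⊆ R) : (S ∩ R).card ≤ 1 := by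
  have hRU : S ∩ R = S ∩ U :=
    (inter_subset_inter_left hUR).antisymm' fun x hx =>
      mem_inter.2 ⟨(mem_inter.1 hx).1, (mem_filter.1 (hSU hx)).1⟩
  by_contra! h
  obtain ⟨u, hu, w, hw, hne⟩ := hc S hS (hRU ▸ h)
  rw [← hRU] at hu hw
  exact hne ((mem_filter.1 (hSU hu)).2.trans (mem_filter.1 (hSU hw)).2.symm)

theorem IsUniqueMaxColoringOn.piecewise [LinearOrder α] {E : Finset (Finset V)} {R A : Finset V}
    {C : V → α} {m : α} (hC : IsUniqueMaxColoringOn E (R \ A) C) (hm : ∀ v ∈ R \ A, m < C v)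
    (hA : ∀ S ∈ E, S ∩ R ⊆ A → (S ∩ R).card ≤ 1) :
    IsUniqueMaxColoringOn E R (A.piecewise (fun _ => m) C) := by
  intro S hS hSR
  by_cases hSA : S ∩ R ⊆ A
  · obtain ⟨v, hv⟩ := hSR
    exact ⟨v, hv, fun u hu huv => absurd (card_le_one.1 (hA S hS hSA) u hu v hv) huv⟩
  obtain ⟨x, hxR, hxA⟩ := not_subset.1 hSA
  obtain ⟨v, hv, hvmax⟩ := hC S hS ⟨x, by simp_all⟩
  simp only [mem_inter, mem_sdiff] at hv hvmax
  refine ⟨v, mem_inter.2 ⟨hv.1, hv.2.1⟩, fun u hu huv => ?_⟩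
  rw [piecewise_eq_of_notMem _ _ _ hv.2.2]
  by_cases huA : u ∈ A
  · rw [piecewise_eq_of_mem _ _ _ huA]
    exact hm v (mem_sdiff.2 hv.2)
  · rw [piecewise_eq_of_notMem _ _ _ huA]
    exact hvmax u ⟨(mem_inter.1 hu).1, (mem_inter.1 hu).2, huA⟩ huv

section potential

variable [DecidableEq α] {R A : Finset V} {L : V → Finset α} {m : α}

theorem potential_sdiff_erase_le {k : ℝ} (hk : 1 < k) (hAU : A ⊆ R.filter (m ∈ L ·))
    (hA : potential (k / (k - 1)) (R.filter (m ∈ L ·)) L ≤ k * potential (k / (k - 1)) A L) :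
    potential (k / (k - 1)) (R \ A) (fun v => (L v).erase m) ≤ potential (k / (k - 1)) R L := by
  set U := R.filter (m ∈ L ·)
  set q := k / (k - 1)
  have hUR : U ⊆ R := filter_subset _ _
  have hsplit : (R \ A) \ (U \ A) = R \ U := sdiff_sdiff_sdiff_cancel_right hAU
  have hR : potential q (R \ U) L + potential q U L = potential q R L := sum_sdiff hUR
  have hU : potential q (U \ A) L + potential q A L = potential q U L := sum_sdiff hAU
  have hRA : potential q (R \ U) (fun v => (L v).erase m) +
      potential q (U \ A) (fun v => (L v).erase m) =
        potential q (R \ A) (fun v => (L v).erase m) := by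
    rw [← hsplit]
    exact sum_sdiff (sdiff_subset_sdiff hUR (le_refl A))
  rw [← hRA,
    potential_erase_of_forall_mem (by positivity) fun v hv => (mem_filter.1 (mem_sdiff.1 hv).1).2,
    potential_erase_of_forall_notMem fun v hv hm =>
      (mem_sdiff.1 hv).2 (mem_filter.2 ⟨(mem_sdiff.1 hv).1, hm⟩)]
  have hq : q * potential q (U \ A) L ≤ potential q U L := by
    rw [div_mul_eq_mul_div, div_le_iff₀ (by linarith)]
    nlinarith
  linarith

end potential

theorem exists_uniqueMaxColoringOn_of_potential_lt_one [LinearOrder α] [Nonempty α]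
    {E : Finset (Finset V)} {k : ℕ} (hk : 2 ≤ k)
    (hered : ∀ U : Finset V, ∃ c : V → Fin k, IsProperColoringOn E U c) (T : Finset α) :
    ∀ (R : Finset V) (L : V → Finset α), (∀ v ∈ R, L v ⊆ T) →
      potential ((k : ℝ) / ((k : ℝ) - 1)) R L < 1 →
      ∃ C : V → α, (∀ v ∈ R, C v ∈ L v) ∧ IsUniqueMaxColoringOn E R C := by
  induction T using Finset.induction_on_min with
  | empty =>
    intro R L hLT hR
    have hL : ∀ v ∈ R, L v = ∅ := fun v hv => subset_empty.1 (hLT v hv)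
    have hpot : potential ((k : ℝ) / ((k : ℝ) - 1)) R L = ∑ _v ∈ R, (1 : ℝ) :=
      sum_congr rfl fun v hv => by simp [hL v hv]
    rw [hpot, sum_const, nsmul_one, Nat.cast_lt_one, card_eq_zero] at hR
    subst hR
    exact ⟨fun _ => Classical.arbitrary α, by simp, fun S _ h => by simp at h⟩
  | insert m T hmT ih =>
    intro R L hLT hR
    set q := (k : ℝ) / ((k : ℝ) - 1)
    set U := R.filter (m ∈ L ·)
    obtain ⟨c, hc⟩ := hered U
    have : Nonempty (Fin k) := ⟨⟨0, by omega⟩⟩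
    obtain ⟨i, hi⟩ := exists_sum_le_card_mul_sum_fiber c U (fun v => q ^ (-((L v).card : ℤ)))
    set A := U.filter (c · = i)
    have hAU : A ⊆ U := filter_subset _ _
    have hUR : U ⊆ R := filter_subset _ _
    have hk1 : (1 : ℝ) < k := by exact_mod_cast hk
    have hL'T : ∀ v ∈ R \ A, (L v).erase m ⊆ T := fun v hv =>
      (erase_subset_erase m (hLT v (mem_sdiff.1 hv).1)).trans (erase_insert_subset m T)
    obtain ⟨C, hCL, hC⟩ := ih (R \ A) (fun v => (L v).erase m) hL'T
      ((potential_sdiff_erase_le hk1 hAU (by rwa [Fintype.card_fin] at hi)).trans_lt hR)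
    refine ⟨A.piecewise (fun _ => m) C, fun v hv => ?_, hC.piecewise (fun v hv => ?_)
      fun S hS hSA => hc.card_inter_le_one hS hSA hUR⟩
    · by_cases hvA : v ∈ A
      · rw [piecewise_eq_of_mem _ _ _ hvA]
        exact (mem_filter.1 (hAU hvA)).2
      · rw [piecewise_eq_of_notMem _ _ _ hvA]
        exact mem_of_mem_erase (hCL v (mem_sdiff.2 ⟨hv, hvA⟩))
    · exact hmT _ (hL'T v hv (hCL v hv))

end Hypergraph

theorem um_coloring_from_lists_potential_general {V : Type} [Fintype V] [DecidableEq V]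
    (E : Finset (Finset V)) (k : ℕ) (hk : 2 ≤ k)
    (hered : ∀ V' : Finset V, ∃ c : V → Fin k, ∀ S ∈ E,
        2 ≤ (S ∩ V').card → ∃ u ∈ S ∩ V', ∃ w ∈ S ∩ V', c u ≠ c w)
    (L : V → Finset ℕ)
    (hsum : ∑ v : V, ((k : ℝ) / ((k : ℝ) - 1)) ^ (-((L v).card : ℤ)) < 1) :
    ∃ C : V → ℕ, (∀ v, C v ∈ L v) ∧
      ∀ S ∈ E, S.Nonempty → ∃ v ∈ S, ∀ u ∈ S, u ≠ v → C u < C v := by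
  obtain ⟨C, hCL, hC⟩ := Hypergraph.exists_uniqueMaxColoringOn_of_potential_lt_one hk hered
    (univ.biUnion L) univ L (fun v _ => subset_biUnion_of_mem L (mem_univ v)) hsum
  refine ⟨C, fun v => hCL v (mem_univ v), fun S hS hSne => ?_⟩
  simpa only [inter_univ] using hC S hS (by rwa [inter_univ])

/-- Potential-method theorem: if `H = (V, E)` is hereditarily `k`-colorable and
`∑_v λ^{-|L_v|} < 1` with `λ = k/(k-1)`, then `H` admits a unique-maximum coloring
from the lists `L` (of positive integers). -/
theorem um_coloring_from_lists_potential {V : Type} [Fintype V] [DecidableEq V]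
    (E : Finset (Finset V)) (k : ℕ) (hk : 2 ≤ k)
    (hered : ∀ V' : Finset V, ∃ c : V → Fin k, ∀ S ∈ E,
        2 ≤ (S ∩ V').card → ∃ u ∈ S ∩ V', ∃ w ∈ S ∩ V', c u ≠ c w)
    (L : V → Finset ℕ) (hpos : ∀ v : V, ∀ x ∈ L v, 0 < x)
    (hsum : ∑ v : V, ((k : ℝ) / ((k : ℝ) - 1)) ^ (-((L v).card : ℤ)) < 1) :
    ∃ C : V → ℕ, (∀ v, C v ∈ L v) ∧
      ∀ S ∈ E, S.Nonempty → ∃ v ∈ S, ∀ u ∈ S, u ≠ v → C u < C v :=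
  um_coloring_from_lists_potential_general E k hk hered L hsum
end

section
/- Let H = (V, E) be a hypergraph with n vertices that is hereditarily k-colorable, and set λ = k/(k−1). If every list L_v satisfies |L_v| > log_λ n, then H admits a unique-maximum coloring from the lists L = {L_v}. -/
/-!
Strong induction on the vertex set `U`, keeping the potential `∑ v ∈ U, q ^ |L v|` with
`q = (k - 1) / k = λ⁻¹` below `1`; the hypothesis `|L v| > log_λ n` makes every term smaller than
`1 / n`. Let `m` be the smallest color in any list and `A` the set of vertices whose list contains
`m`. Color `H[A]` properly with `k` colors, let `D` be a color class of largest weight, give `D` the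
color `m`, delete `m` from all other lists and recurse on `U \ D`. An edge meeting `U` only in `D`
meets it in a single vertex, since `D` is independent; any other edge takes its maximum outside `D`,
strictly above `m`. Deleting `m` multiplies the weight of `A \ D` by `λ`, and removing `D`, which
carries at least a `1/k` share of the weight of `A`, pays for exactly that.
-/

open Finset

variable {V : Type*}

theorem exists_le_sum_colorClass {k : ℕ} [NeZero k] (c : V → Fin k) (A : Finset V)
    (w : V → ℝ) : ∃ i, (k : ℝ)⁻¹ * ∑ v ∈ A, w v ≤ ∑ v ∈ A.filter (c · = i), w v := by
  obtain ⟨i, -, hi⟩ := exists_le_sum_fiber_of_maps_to_of_nsmul_le_sum (f := c)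
    (fun _ _ => mem_univ _) univ_nonempty (b := (k : ℝ)⁻¹ * ∑ v ∈ A, w v) (by
      rw [card_univ, Fintype.card_fin, nsmul_eq_mul, mul_inv_cancel_left₀ (NeZero.ne _)])
  exact ⟨i, hi⟩

theorem nonempty_of_sum_pow_card_lt_one {q : ℝ} (hq : 0 ≤ q) {U : Finset V}
    {L : V → Finset ℕ} (hL : ∑ v ∈ U, q ^ (L v).card < 1) {v : V} (hv : v ∈ U) :
    (L v).Nonempty := by
  by_contra h
  have := (single_le_sum (fun v _ => pow_nonneg hq (L v).card) hv).trans_lt hL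
  simp [not_nonempty_iff_eq_empty.1 h] at this

variable [DecidableEq V]

def IsProperOn {β : Type*} (E : Finset (Finset V)) (A : Finset V) (c : V → β) : Prop :=
  ∀ S ∈ E, 2 ≤ (S ∩ A).card → ∃ u ∈ S ∩ A, ∃ w ∈ S ∩ A, c u ≠ c w

def IsUniqueMaxOn {α : Type*} [LT α] (E : Finset (Finset V)) (U : Finset V) (C : V → α) :
    Prop :=
  ∀ S ∈ E, (S ∩ U).Nonempty → ∃ v ∈ S ∩ U, ∀ u ∈ S ∩ U, u ≠ v → C u < C v

/-- A color class of a proper coloring of `H[A]` is independent in `H[U]` for every `U ⊇ A`. -/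
theorem IsProperOn.card_inter_le_one {β : Type*} [DecidableEq β] {E : Finset (Finset V)}
    {A U S : Finset V} {c : V → β} (hc : IsProperOn E A c) (hAU : A ⊆ U) (hS : S ∈ E) {i : β}
    (hSU : S ∩ U ⊆ A.filter (c · = i)) : (S ∩ U).card ≤ 1 := by
  have hSA : S ∩ U = S ∩ A := Subset.antisymm
    (fun v hv => mem_inter.2 ⟨(mem_inter.1 hv).1, (mem_filter.1 (hSU hv)).1⟩)
    (inter_subset_inter_left hAU)
  by_contra! h
  rw [hSA] at h hSU
  obtain ⟨u, hu, w, hw, hne⟩ := hc S hS h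
  exact hne (((mem_filter.1 (hSU hu)).2).trans (mem_filter.1 (hSU hw)).2.symm)

theorem IsUniqueMaxOn.piecewise_const {α : Type*} [LT α] {E : Finset (Finset V)}
    {U D : Finset V} {C : V → α} {m : α} (hC : IsUniqueMaxOn E (U \ D) C)
    (hm : ∀ v ∈ U \ D, m < C v) (hD : ∀ S ∈ E, S ∩ U ⊆ D → (S ∩ U).card ≤ 1) :
    IsUniqueMaxOn E U (D.piecewise (fun _ => m) C) := by
  intro S hS hSU
  by_cases hSUD : (S ∩ (U \ D)).Nonempty
  · obtain ⟨v, hv, hvmax⟩ := hC S hS hSUD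
    simp only [mem_inter, mem_sdiff] at hv
    refine ⟨v, mem_inter.2 ⟨hv.1, hv.2.1⟩, fun u hu huv => ?_⟩
    simp only [mem_inter] at hu
    rw [piecewise_eq_of_notMem _ _ _ hv.2.2]
    by_cases huD : u ∈ D
    · rw [piecewise_eq_of_mem _ _ _ huD]
      exact hm v (mem_sdiff.2 hv.2)
    · rw [piecewise_eq_of_notMem _ _ _ huD]
      exact hvmax u (by simp [hu.1, hu.2, huD]) huv
  · have hsub : S ∩ U ⊆ D := fun u hu => by
      by_contra huD
      simp only [mem_inter] at hu
      exact hSUD ⟨u, mem_inter.2 ⟨hu.1, mem_sdiff.2 ⟨hu.2, huD⟩⟩⟩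
    obtain ⟨v, hv⟩ := hSU
    exact ⟨v, hv, fun u hu huv => absurd (card_le_one.1 (hD S hS hsub) u hu v hv) huv⟩

/-- Deleting a color `m` from the lists of `A \ D` divides their weights by `q`; this is paid for
by removing `D` itself, as long as `D` carries at least a `1 - q` share of the weight of `A`. -/
theorem sum_pow_card_erase_le {q : ℝ} (hq : 0 < q) {U D : Finset V} {L : V → Finset ℕ} {m : ℕ}
    (hDU : D ⊆ U.filter (m ∈ L ·))
    (hD : (1 - q) * ∑ v ∈ U.filter (m ∈ L ·), q ^ (L v).card ≤ ∑ v ∈ D, q ^ (L v).card) :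
    ∑ v ∈ U \ D, q ^ ((L v).erase m).card ≤ ∑ v ∈ U, q ^ (L v).card := by
  set A := U.filter (m ∈ L ·)
  have hAU : A ⊆ U := filter_subset _ _
  have herase : ∀ v, q ^ ((L v).erase m).card =
      q ^ (L v).card + if m ∈ L v then q ^ (L v).card * ((1 - q) / q) else 0 := by
    intro v
    split_ifs with hm
    · rw [← card_erase_add_one hm, pow_succ]
      field_simp
      ring
    · rw [erase_eq_of_notMem hm, add_zero]
  have hfilter : (U \ D).filter (m ∈ L ·) = A \ D := by
    ext v
    simp only [A, mem_filter, mem_sdiff]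
    tauto
  have hsplitA := sum_sdiff hDU (f := fun v => q ^ (L v).card)
  have hsplitU := sum_sdiff (hDU.trans hAU) (f := fun v => q ^ (L v).card)
  rw [sum_congr rfl fun v _ => herase v, sum_add_distrib, ← sum_filter, hfilter, ← sum_mul]
  have hq1 : (1 - q) * ∑ v ∈ A \ D, q ^ (L v).card ≤ q * ∑ v ∈ D, q ^ (L v).card := by
    rw [← hsplitA] at hD
    linear_combination hD
  have hgain : (∑ v ∈ A \ D, q ^ (L v).card) * ((1 - q) / q) ≤ ∑ v ∈ D, q ^ (L v).card := by
    rw [mul_div_assoc', div_le_iff₀ hq]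
    linarith
  linarith

theorem exists_isUniqueMaxOn_of_sum_lt_one {E : Finset (Finset V)} {k : ℕ} (hk : 2 ≤ k)
    (hered : ∀ A : Finset V, ∃ c : V → Fin k, IsProperOn E A c) (U : Finset V)
    (L : V → Finset ℕ) (hL : ∑ v ∈ U, (((k : ℝ) - 1) / k) ^ (L v).card < 1) :
    ∃ C : V → ℕ, (∀ v ∈ U, C v ∈ L v) ∧ IsUniqueMaxOn E U C := by
  induction U using Finset.strongInduction generalizing L with
  | H U ih =>
  set q : ℝ := ((k : ℝ) - 1) / k
  have hk' : (2 : ℝ) ≤ k := by exact_mod_cast hk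
  have hq : 0 < q := div_pos (by linarith) (by linarith)
  rcases U.eq_empty_or_nonempty with rfl | ⟨v₀, hv₀⟩
  · exact ⟨fun _ => 0, by simp, fun S _ h => by simp at h⟩
  have hB : (U.biUnion L).Nonempty :=
    (nonempty_of_sum_pow_card_lt_one hq.le hL hv₀).mono (subset_biUnion_of_mem L hv₀)
  set m := (U.biUnion L).min' hB
  have : NeZero k := ⟨by omega⟩
  set A := U.filter (m ∈ L ·)
  obtain ⟨c, hc⟩ := hered A
  obtain ⟨i, hi⟩ := exists_le_sum_colorClass c A fun v => q ^ (L v).card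
  set D := A.filter (c · = i)
  have hDA : D ⊆ A := filter_subset _ _
  have hAU : A ⊆ U := filter_subset _ _
  have hq' : 1 - q = (k : ℝ)⁻¹ := by simp only [q]; field_simp; ring
  rw [← hq'] at hi
  have hDne : D.Nonempty := by
    obtain ⟨v, hv, hmv⟩ := mem_biUnion.1 (min'_mem _ hB)
    have hApos : 0 < ∑ v ∈ A, q ^ (L v).card :=
      sum_pos (fun v _ => pow_pos hq _) ⟨v, mem_filter.2 ⟨hv, hmv⟩⟩
    have hq1 : 0 < 1 - q := by rw [hq']; positivity
    exact nonempty_of_sum_ne_zero ((mul_pos hq1 hApos).trans_le hi).ne'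
  obtain ⟨C, hCL, hC⟩ := ih (U \ D) (sdiff_ssubset (hDA.trans hAU) hDne)
    (fun v => (L v).erase m) ((sum_pow_card_erase_le hq hDA hi).trans_lt hL)
  refine ⟨D.piecewise (fun _ => m) C, fun v hv => ?_, hC.piecewise_const (fun v hv => ?_)
    fun S hS hSD => hc.card_inter_le_one hAU hS hSD⟩
  · by_cases hvD : v ∈ D
    · rw [piecewise_eq_of_mem _ _ _ hvD]
      exact (mem_filter.1 (hDA hvD)).2
    · rw [piecewise_eq_of_notMem _ _ _ hvD]
      exact mem_of_mem_erase (hCL v (mem_sdiff.2 ⟨hv, hvD⟩))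
  · have hCv := hCL v hv
    exact lt_of_le_of_ne (min'_le _ _ (mem_biUnion.2 ⟨v, (mem_sdiff.1 hv).1,
      mem_of_mem_erase hCv⟩)) (ne_of_mem_erase hCv).symm

theorem pow_lt_inv_of_logb_lt {b x : ℝ} (hb : 1 < b) (hx : 0 < x) {n : ℕ}
    (h : Real.logb b x < n) : b⁻¹ ^ n < x⁻¹ := by
  rw [inv_pow]
  refine inv_strictAnti₀ hx ?_
  rwa [← Real.rpow_natCast, ← Real.logb_lt_iff_lt_rpow hb hx]

theorem sum_lt_one_of_forall_lt_inv_card {ι : Type*} [Fintype ι] {f : ι → ℝ}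
    (hf : ∀ i, f i < (Fintype.card ι : ℝ)⁻¹) : ∑ i, f i < 1 := by
  cases isEmpty_or_nonempty ι
  · simp
  calc ∑ i, f i < ∑ _ : ι, (Fintype.card ι : ℝ)⁻¹ :=
        sum_lt_sum_of_nonempty univ_nonempty fun i _ => hf i
    _ = 1 := by simp

theorem um_coloring_from_large_lists_general {V : Type} [Fintype V] [DecidableEq V]
    (E : Finset (Finset V)) (k : ℕ) (hk : 2 ≤ k)
    (hered : ∀ V' : Finset V, ∃ c : V → Fin k, ∀ S ∈ E,
        2 ≤ (S ∩ V').card → ∃ u ∈ S ∩ V', ∃ w ∈ S ∩ V', c u ≠ c w)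
    (L : V → Finset ℕ)
    (hsize : ∀ v : V,
      Real.logb ((k : ℝ) / ((k : ℝ) - 1)) (Fintype.card V) < ((L v).card : ℝ)) :
    ∃ C : V → ℕ, (∀ v, C v ∈ L v) ∧
      ∀ S ∈ E, S.Nonempty → ∃ v ∈ S, ∀ u ∈ S, u ≠ v → C u < C v := by
  have hk' : (2 : ℝ) ≤ k := by exact_mod_cast hk
  have hb : 1 < (k : ℝ) / ((k : ℝ) - 1) := by rw [one_lt_div (by linarith)]; linarith
  have hL : ∑ v, (((k : ℝ) - 1) / k) ^ (L v).card < 1 :=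
    sum_lt_one_of_forall_lt_inv_card fun v => by
      rw [← inv_div]
      exact pow_lt_inv_of_logb_lt hb (Nat.cast_pos.2 (Fintype.card_pos_iff.2 ⟨v⟩)) (hsize v)
  obtain ⟨C, hCL, hC⟩ := exists_isUniqueMaxOn_of_sum_lt_one hk hered univ L hL
  refine ⟨C, fun v => hCL v (mem_univ v), fun S hS hSne => ?_⟩
  simpa only [inter_univ] using hC S hS (by rwa [inter_univ])

/-- If `H = (V, E)` with `n` vertices is hereditarily `k`-colorable and every list
has size greater than `log_λ n` where `λ = k/(k-1)`, then `H` admits a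
unique-maximum coloring from the lists. -/
theorem um_coloring_from_large_lists {V : Type} [Fintype V] [DecidableEq V]
    (E : Finset (Finset V)) (k : ℕ) (hk : 2 ≤ k)
    (hered : ∀ V' : Finset V, ∃ c : V → Fin k, ∀ S ∈ E,
        2 ≤ (S ∩ V').card → ∃ u ∈ S ∩ V', ∃ w ∈ S ∩ V', c u ≠ c w)
    (L : V → Finset ℕ) (hpos : ∀ v : V, ∀ x ∈ L v, 0 < x)
    (hsize : ∀ v : V,
      Real.logb ((k : ℝ) / ((k : ℝ) - 1)) (Fintype.card V) < ((L v).card : ℝ)) :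
    ∃ C : V → ℕ, (∀ v, C v ∈ L v) ∧
      ∀ S ∈ E, S.Nonempty → ∃ v ∈ S, ∀ u ∈ S, u ≠ v → C u < C v :=
  um_coloring_from_large_lists_general E k hk hered L hsize
end

section
/- Let x_1 ≥ x_2 ≥ ... ≥ x_n be positive integers with Σ_{i=1}^n 2^{−x_i} ≥ 1. Then there exists a family of color lists L = {L_i}_{i∈[n]} with |L_i| = x_i for each i such that the discrete interval hypergraph H_n admits no unique-maximum coloring from L. -/
/-!
Fix `D ≥ max x` and work with the integer weights `2 ^ (D - x i)` on a subpath `[a, b]`, by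
induction on its length. If the tail `[a + 1, b]` already has weight `≥ 2 ^ D`, lists blocking the
tail block the whole path. Otherwise all tail weights are multiples of `2 ^ (D - x a)`, and a
parity argument shows that the largest size `x a` occurs again in the tail; let `p` be its last
occurrence. Merging the vertices `p - 1, p` (both of size `x a`) into one vertex of size `x a - 1`
preserves the total weight and the monotonicity, so the shorter path has blocking lists `L`.
Raising all colors by one and giving both copies the list of the merged vertex together with the
new color `1` blocks the original path: in a unique-maximum coloring the two copies get distinct
colors, and deleting the copy with the smaller color leaves a unique-maximum coloring from `L`.
-/

open Finset

def IsUniqueMaxColoring (a b : ℕ) (C : ℕ → ℕ) : Prop :=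
  ∀ s t : ℕ, a ≤ s → s ≤ t → t ≤ b → ∃ v ∈ Icc s t, ∀ u ∈ Icc s t, u ≠ v → C u < C v

def IsBlockingFamily (a b : ℕ) (x : ℕ → ℕ) (L : ℕ → Finset ℕ) : Prop :=
  (∀ i ∈ Icc a b, (L i).card = x i) ∧ (∀ i ∈ Icc a b, ∀ c ∈ L i, 0 < c) ∧
    ¬ ∃ C : ℕ → ℕ, (∀ i ∈ Icc a b, C i ∈ L i) ∧ IsUniqueMaxColoring a b C

namespace IsUniqueMaxColoring

variable {a b : ℕ} {C : ℕ → ℕ}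

theorem mono (h : IsUniqueMaxColoring a b C) {a' b' : ℕ} (ha : a ≤ a') (hb : b' ≤ b) :
    IsUniqueMaxColoring a' b' C :=
  fun s t hs hst ht => h s t (ha.trans hs) hst (ht.trans hb)

theorem apply_ne_apply_add_one (h : IsUniqueMaxColoring a b C) {i : ℕ} (hi : a ≤ i)
    (hib : i + 1 ≤ b) : C i ≠ C (i + 1) := by
  obtain ⟨v, hv, hmax⟩ := h i (i + 1) hi (Nat.le_succ i) hib
  rw [mem_Icc] at hv
  rcases (by omega : v = i ∨ v = i + 1) with rfl | rfl
  · exact (hmax (v + 1) (by simp) (by omega)).ne'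
  · exact (hmax i (by simp) (by omega)).ne

theorem comp_strictMonoOn (h : IsUniqueMaxColoring a b C) {f : ℕ → ℕ} {S : Set ℕ}
    (hf : StrictMonoOn f S) (hC : ∀ i ∈ Icc a b, C i ∈ S) : IsUniqueMaxColoring a b (f ∘ C) := by
  intro s t hs hst ht
  obtain ⟨v, hv, hmax⟩ := h s t hs hst ht
  have hsub : ∀ u ∈ Icc s t, u ∈ Icc a b := fun u hu => by
    rw [mem_Icc] at hu ⊢; omega
  exact ⟨v, hv, fun u hu huv => hf (hC u (hsub u hu)) (hC v (hsub v hv)) (hmax u hu huv)⟩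

/-- `i ↦ if i ≤ d then i - 1 else i` enumerates `[a, b]` without `d`. An interval around `d` also
contains its neighbour `e`, so its maximum is not at `d`. -/
theorem comp_skip (h : IsUniqueMaxColoring a b C) {d e : ℕ} (hd : d ∈ Icc a b)
    (hde : d + 1 = e ∨ e + 1 = d) (hlt : C d < C e) :
    IsUniqueMaxColoring (a + 1) b (fun i => C (if i ≤ d then i - 1 else i)) := by
  set σ : ℕ → ℕ := fun i => if i ≤ d then i - 1 else i with hσ
  have hσ_mono : StrictMonoOn σ (Set.Ici 1) := fun i hi j hj hij => by
    simp only [Set.mem_Ici] at hi hj; simp only [hσ]; split_ifs <;> omega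
  have hσ_ne : ∀ i, 1 ≤ i → σ i ≠ d := fun i hi => by simp only [hσ]; split_ifs <;> omega
  rw [mem_Icc] at hd
  intro s t hs hst ht
  have hI : ∀ u ∈ Icc s t, u ∈ Set.Ici 1 := fun u hu => by
    rw [mem_Icc] at hu; rw [Set.mem_Ici]; omega
  have hσ_mem : ∀ u ∈ Icc s t, σ u ∈ Icc (σ s) (σ t) := fun u hu =>
    mem_Icc.mpr ⟨hσ_mono.monotoneOn (hI s (left_mem_Icc.mpr hst)) (hI u hu) (mem_Icc.mp hu).1,
      hσ_mono.monotoneOn (hI u hu) (hI t (right_mem_Icc.mpr hst)) (mem_Icc.mp hu).2⟩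
  obtain ⟨v, hv, hmax⟩ := h (σ s) (σ t) (by simp only [hσ]; split_ifs <;> omega)
    (hσ_mono.monotoneOn (hI s (left_mem_Icc.mpr hst)) (hI t (right_mem_Icc.mpr hst)) hst)
    (by simp only [hσ]; split_ifs <;> omega)
  have hvd : v ≠ d := by
    rintro rfl
    have := hσ_ne s (by omega)
    have := hσ_ne t (by omega)
    refine (hmax e ?_ (by omega)).not_gt hlt
    rw [mem_Icc] at hv ⊢
    omega
  obtain ⟨w, hw, rfl⟩ : ∃ w ∈ Icc s t, σ w = v := by
    refine ⟨if v < d then v + 1 else v, ?_, ?_⟩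
    all_goals simp only [hσ, mem_Icc] at hv ⊢
    all_goals split_ifs at hv ⊢ <;> omega
  exact ⟨w, hw, fun u hu huw => hmax (σ u) (hσ_mem u hu) (hσ_mono.injOn.ne (hI u hu) (hI w hw) huw)⟩

end IsUniqueMaxColoring

theorem isBlockingFamily_Icc_of_eq_zero {a b i : ℕ} {x : ℕ → ℕ} (hi : i ∈ Icc a b)
    (hxi : x i = 0) :
    IsBlockingFamily a b x (fun j => Icc 1 (x j)) := by
  refine ⟨fun j _ => by simp, fun j _ c hc => by rw [mem_Icc] at hc; omega, ?_⟩
  rintro ⟨C, hC, -⟩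
  simpa [hxi] using hC i hi

theorem IsBlockingFamily.update_left {a b : ℕ} {x : ℕ → ℕ} {L : ℕ → Finset ℕ}
    (h : IsBlockingFamily (a + 1) b x L) :
    IsBlockingFamily a b x (Function.update L a (Icc 1 (x a))) := by
  obtain ⟨hcard, hpos, hblock⟩ := h
  have hL : ∀ i ∈ Icc (a + 1) b, Function.update L a (Icc 1 (x a)) i = L i := fun i hi =>
    Function.update_of_ne (by rw [mem_Icc] at hi; omega) _ _
  refine ⟨fun i hi => ?_, fun i hi c hc => ?_, ?_⟩
  · rcases eq_or_ne i a with rfl | hia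
    · simp
    · rw [hL i (by rw [mem_Icc] at hi ⊢; omega), hcard i (by rw [mem_Icc] at hi ⊢; omega)]
  · rcases eq_or_ne i a with rfl | hia
    · simp only [Function.update_self, mem_Icc] at hc; omega
    · rw [hL i (by rw [mem_Icc] at hi ⊢; omega)] at hc
      exact hpos i (by rw [mem_Icc] at hi ⊢; omega) c hc
  · rintro ⟨C, hCL, hC⟩
    refine hblock ⟨C, fun i hi => ?_, hC.mono (Nat.le_succ a) le_rfl⟩
    rw [← hL i hi]
    exact hCL i (by rw [mem_Icc] at hi ⊢; omega)

/-- The lists for the path in which vertex `p` of a shorter path on `[a + 1, b]` is doubled into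
`p - 1, p`: every color is raised by one, and the new smallest color `1` is offered at both
copies. -/
def splitLists (p : ℕ) (L : ℕ → Finset ℕ) (i : ℕ) : Finset ℕ :=
  let B := (L (if i < p then i + 1 else i)).image (· + 1)
  if i + 1 = p ∨ i = p then insert 1 B else B

theorem mem_splitLists {p : ℕ} {L : ℕ → Finset ℕ} {i c : ℕ} :
    c ∈ splitLists p L i ↔
      (c = 1 ∧ (i + 1 = p ∨ i = p)) ∨ (1 ≤ c ∧ c - 1 ∈ L (if i < p then i + 1 else i)) := by
  have hB : c ∈ (L (if i < p then i + 1 else i)).image (· + 1) ↔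
      1 ≤ c ∧ c - 1 ∈ L (if i < p then i + 1 else i) := by
    rw [mem_image]
    constructor
    · rintro ⟨c', hc', rfl⟩; simpa using hc'
    · rintro ⟨hc, hc'⟩; exact ⟨c - 1, hc', by omega⟩
  unfold splitLists
  dsimp only
  by_cases hi : i + 1 = p ∨ i = p
  · rw [if_pos hi, mem_insert, hB]; tauto
  · rw [if_neg hi, hB]; tauto

theorem card_splitLists {p : ℕ} {L : ℕ → Finset ℕ} (hpos : ∀ c ∈ L p, 0 < c) (i : ℕ) :
    (splitLists p L i).card =
      (L (if i < p then i + 1 else i)).card + if i + 1 = p ∨ i = p then 1 else 0 := by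
  unfold splitLists
  dsimp only
  by_cases hdouble : i + 1 = p ∨ i = p
  · have hp : (if i < p then i + 1 else i) = p := by split_ifs <;> omega
    have h1 : 1 ∉ (L p).image (· + 1) := fun h1 => by
      obtain ⟨c, hc, hc1⟩ := mem_image.mp h1
      have := hpos c hc
      omega
    rw [if_pos hdouble, if_pos hdouble, hp, card_insert_of_notMem h1,
      card_image_of_injective _ (add_left_injective 1)]
  · rw [if_neg hdouble, if_neg hdouble, card_image_of_injective _ (add_left_injective 1),
      add_zero]

/-- Delete whichever of the copies `p - 1, p` has the smaller color, and lower all colors by one. -/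
theorem exists_isUniqueMaxColoring_of_splitLists {a b p : ℕ} {L : ℕ → Finset ℕ} {C : ℕ → ℕ}
    (hap : a < p) (hpb : p ≤ b) (hCL : ∀ i ∈ Icc a b, C i ∈ splitLists p L i)
    (hC : IsUniqueMaxColoring a b C) :
    ∃ C' : ℕ → ℕ, (∀ i ∈ Icc (a + 1) b, C' i ∈ L i) ∧ IsUniqueMaxColoring (a + 1) b C' := by
  have hCpos : ∀ i ∈ Icc a b, 1 ≤ C i := fun i hi => by
    rcases mem_splitLists.mp (hCL i hi) with ⟨h1, -⟩ | ⟨h1, -⟩ <;> omega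
  obtain ⟨d, q, hdq, hlt⟩ : ∃ d q, (d = p - 1 ∧ q = p ∨ d = p ∧ q = p - 1) ∧ C d < C q := by
    have hne := hC.apply_ne_apply_add_one (i := p - 1) (by omega) (by omega)
    rw [show p - 1 + 1 = p by omega] at hne
    rcases hne.lt_or_gt with h | h
    · exact ⟨p - 1, p, by omega, h⟩
    · exact ⟨p, p - 1, by omega, h⟩
  set σ : ℕ → ℕ := fun j => if j ≤ d then j - 1 else j with hσ
  have hσ_mem : ∀ j ∈ Icc (a + 1) b, σ j ∈ Icc a b := by
    intro j hj; simp only [hσ, mem_Icc] at hj ⊢; split_ifs <;> omega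
  refine ⟨fun j => C (σ j) - 1, fun j hj => ?_, ?_⟩
  · rcases mem_splitLists.mp (hCL (σ j) (hσ_mem j hj)) with ⟨hC1, hσj⟩ | ⟨-, hmem⟩
    · have hσq : σ j = q := by
        rw [mem_Icc] at hj; simp only [hσ] at hσj ⊢; split_ifs at hσj ⊢ <;> omega
      have := hCpos d (by rw [mem_Icc]; omega)
      rw [hσq] at hC1
      omega
    · convert hmem using 2
      rw [mem_Icc] at hj; simp only [hσ]; split_ifs <;> omega
  · exact (hC.comp_skip (by rw [mem_Icc]; omega) (by omega) hlt).comp_strictMonoOn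
      (f := fun c => c - 1) (S := Set.Ici 1)
      (fun m hm n hn hmn => by simp only [Set.mem_Ici] at hm hn; dsimp only; omega)
      (fun j hj => hCpos (σ j) (hσ_mem j hj))

theorem IsBlockingFamily.split {a b p : ℕ} {x : ℕ → ℕ} {L : ℕ → Finset ℕ}
    (hap : a < p) (hpb : p ≤ b) (hconst : ∀ i ∈ Icc a p, x i = x p) (hxp : 1 ≤ x p)
    (h : IsBlockingFamily (a + 1) b (Function.update x p (x p - 1)) L) :
    IsBlockingFamily a b x (splitLists p L) := by
  obtain ⟨hcard, hpos, hblock⟩ := h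
  have hsplit_pos : ∀ i, ∀ c ∈ splitLists p L i, 0 < c := by
    intro i c hc
    rcases mem_splitLists.mp hc with ⟨rfl, -⟩ | ⟨hc, -⟩ <;> omega
  refine ⟨fun i hi => ?_, fun i _ => hsplit_pos i, ?_⟩
  · rw [mem_Icc] at hi
    have hj : (if i < p then i + 1 else i) ∈ Icc (a + 1) b := by
      rw [mem_Icc]; split_ifs <;> omega
    rw [card_splitLists (hpos p (by rw [mem_Icc]; omega)), hcard _ hj]
    by_cases hdouble : i + 1 = p ∨ i = p
    · rw [if_pos hdouble, show (if i < p then i + 1 else i) = p by split_ifs <;> omega,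
        Function.update_self, hconst i (by rw [mem_Icc]; omega)]
      omega
    · rw [if_neg hdouble, Function.update_of_ne (by split_ifs <;> omega), add_zero]
      split_ifs with hip
      · rw [hconst i (by rw [mem_Icc]; omega), hconst (i + 1) (by rw [mem_Icc]; omega)]
      · rfl
  · rintro ⟨C, hCL, hC⟩
    exact hblock (exists_isUniqueMaxColoring_of_splitLists hap hpb hCL hC)

theorem antitoneOn_update_sub_one {x : ℕ → ℕ} {s : Set ℕ} {p : ℕ} (hx : AntitoneOn x s)
    (hp : p ∈ s) (hlast : ∀ i ∈ s, p < i → x i < x p) :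
    AntitoneOn (Function.update x p (x p - 1)) s := by
  intro i hi j hj hij
  rcases eq_or_ne i p with rfl | hip <;> rcases eq_or_ne j i with rfl | hji
  · exact le_rfl
  · rw [Function.update_self, Function.update_of_ne hji]
    have := hlast j hj (lt_of_le_of_ne hij (Ne.symm hji))
    omega
  · exact le_rfl
  · rw [Function.update_of_ne hip]
    rcases eq_or_ne j p with rfl | hjp
    · rw [Function.update_self]
      exact (Nat.sub_le _ _).trans (hx hi hj hij)
    · rw [Function.update_of_ne hjp]
      exact hx hi hj hij

theorem sum_two_pow_sub_update_sub_one {s : Finset ℕ} {x : ℕ → ℕ} {p D : ℕ} (hp : p ∈ s)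
    (hxp : 1 ≤ x p) (hpD : x p ≤ D) :
    ∑ i ∈ s, 2 ^ (D - Function.update x p (x p - 1) i) =
      ∑ i ∈ s, 2 ^ (D - x i) + 2 ^ (D - x p) := by
  rw [← add_sum_erase s _ hp, ← add_sum_erase s _ hp, Function.update_self,
    sum_congr rfl fun i hi => by rw [Function.update_of_ne (ne_of_mem_erase hi)],
    show D - (x p - 1) = D - x p + 1 by omega, pow_succ]
  ring

/-- Otherwise all weights, hence also the gap to `2 ^ D`, are multiples of `2 ^ (D - e + 1)`. -/
theorem exists_eq_of_two_pow_le_add_sum {s : Finset ℕ} {x : ℕ → ℕ} {e D : ℕ}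
    (hle : ∀ i ∈ s, x i ≤ e) (he : 1 ≤ e) (heD : e ≤ D)
    (hlt : ∑ i ∈ s, 2 ^ (D - x i) < 2 ^ D)
    (hge : 2 ^ D ≤ 2 ^ (D - e) + ∑ i ∈ s, 2 ^ (D - x i)) :
    ∃ i ∈ s, x i = e := by
  by_contra! hne
  have hdvd : 2 ^ (D - e + 1) ∣ ∑ i ∈ s, 2 ^ (D - x i) :=
    dvd_sum fun i hi => pow_dvd_pow 2 (by have := hle i hi; have := hne i hi; omega)
  have hgap : 2 ^ (D - e + 1) ≤ 2 ^ D - ∑ i ∈ s, 2 ^ (D - x i) :=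
    Nat.le_of_dvd (by omega) (Nat.dvd_sub (pow_dvd_pow 2 (by omega)) hdvd)
  rw [pow_succ] at hgap
  have := Nat.two_pow_pos (D - e)
  omega

theorem le_of_two_pow_le_sum_Icc {a b D : ℕ} {f : ℕ → ℕ} (h : 2 ^ D ≤ ∑ i ∈ Icc a b, f i) :
    a ≤ b :=
  nonempty_Icc.mp (nonempty_of_sum_ne_zero ((Nat.two_pow_pos D).trans_le h).ne')

theorem exists_split_point {a b D : ℕ} {x : ℕ → ℕ} (hab : a ≤ b)
    (hx : AntitoneOn x (Icc a b : Set ℕ)) (hD : x a ≤ D) (hxa : 1 ≤ x a)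
    (htail : ∑ i ∈ Icc (a + 1) b, 2 ^ (D - x i) < 2 ^ D)
    (hsum : 2 ^ D ≤ 2 ^ (D - x a) + ∑ i ∈ Icc (a + 1) b, 2 ^ (D - x i)) :
    ∃ p ∈ Icc (a + 1) b,
      (∀ i ∈ Icc a p, x i = x p) ∧ ∀ i ∈ Icc (a + 1) b, p < i → x i < x p := by
  have hsub : ∀ i ∈ Icc (a + 1) b, i ∈ Icc a b := fun i hi => by
    rw [mem_Icc] at hi ⊢; omega
  have ha : a ∈ Icc a b := left_mem_Icc.mpr hab
  obtain ⟨p, hpS, hpmax⟩ := ((Icc (a + 1) b).filter (x · = x a)).exists_max_image id <| by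
    obtain ⟨i, hi, hxi⟩ := exists_eq_of_two_pow_le_add_sum
      (fun i hi => hx ha (hsub i hi) (by rw [mem_Icc] at hi; omega)) hxa hD htail hsum
    exact ⟨i, mem_filter.mpr ⟨hi, hxi⟩⟩
  rw [mem_filter] at hpS
  refine ⟨p, hpS.1, fun i hi => ?_, fun i hi hpi => ?_⟩
  · have hi' : i ∈ Icc a b := by rw [mem_Icc] at hi ⊢; have := mem_Icc.mp hpS.1; omega
    have := hx ha hi' (mem_Icc.mp hi).1
    have := hx hi' (hsub p hpS.1) (mem_Icc.mp hi).2
    omega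
  · refine lt_of_le_of_ne (hx (hsub p hpS.1) (hsub i hi) hpi.le) fun hip => ?_
    exact hpi.not_ge (hpmax i (mem_filter.mpr ⟨hi, hip.trans hpS.2⟩))

theorem exists_isBlockingFamily (D a b : ℕ) (x : ℕ → ℕ) (hx : AntitoneOn x (Icc a b : Set ℕ))
    (hD : ∀ i ∈ Icc a b, x i ≤ D) (hsum : 2 ^ D ≤ ∑ i ∈ Icc a b, 2 ^ (D - x i)) :
    ∃ L, IsBlockingFamily a b x L := by
  have hab := le_of_two_pow_le_sum_Icc hsum
  have ha : a ∈ Icc a b := left_mem_Icc.mpr hab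
  have hsub : ∀ i ∈ Icc (a + 1) b, i ∈ Icc a b := fun i hi => by
    rw [mem_Icc] at hi ⊢; omega
  have htail_anti : AntitoneOn x (Icc (a + 1) b : Set ℕ) := hx.mono fun i hi => hsub i hi
  rcases Nat.eq_zero_or_pos (x a) with hxa | hxa
  · exact ⟨_, isBlockingFamily_Icc_of_eq_zero ha hxa⟩
  rw [← insert_Icc_add_one_left_eq_Icc hab, sum_insert (by simp)] at hsum
  by_cases htail : 2 ^ D ≤ ∑ i ∈ Icc (a + 1) b, 2 ^ (D - x i)
  · have htail_ne : a + 1 ≤ b := le_of_two_pow_le_sum_Icc htail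
    obtain ⟨L, hL⟩ :=
      exists_isBlockingFamily D (a + 1) b x htail_anti (fun i hi => hD i (hsub i hi)) htail
    exact ⟨_, hL.update_left⟩
  obtain ⟨p, hp, hconst, hlast⟩ :=
    exists_split_point hab hx (hD a ha) hxa (not_le.mp htail) hsum
  have hxp : x p = x a := (hconst a (by rw [mem_Icc] at hp ⊢; omega)).symm
  have hpIcc := mem_Icc.mp hp
  obtain ⟨L, hL⟩ := exists_isBlockingFamily D (a + 1) b (Function.update x p (x p - 1))
    (antitoneOn_update_sub_one htail_anti hp hlast)
    (fun i hi => by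
      have := hD i (hsub i hi)
      rcases eq_or_ne i p with rfl | hip
      · rw [Function.update_self]; omega
      · rwa [Function.update_of_ne hip])
    (by rw [sum_two_pow_sub_update_sub_one hp (hxp ▸ hxa) (hxp ▸ hD a ha), hxp]; omega)
  exact ⟨_, hL.split (by omega) hpIcc.2 hconst (hxp ▸ hxa)⟩
termination_by b - a
decreasing_by all_goals omega

theorem two_pow_le_sum_two_pow_sub {s : Finset ℕ} {x : ℕ → ℕ} {D : ℕ} (hD : ∀ i ∈ s, x i ≤ D)
    (hsum : 1 ≤ ∑ i ∈ s, (2 : ℝ) ^ (-(x i : ℤ))) : 2 ^ D ≤ ∑ i ∈ s, 2 ^ (D - x i) := by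
  have hterm : ∀ i ∈ s, ((2 ^ (D - x i) : ℕ) : ℝ) = 2 ^ D * (2 : ℝ) ^ (-(x i : ℤ)) := by
    intro i hi
    rw [Nat.cast_pow, Nat.cast_ofNat, pow_sub₀ _ two_ne_zero (hD i hi), zpow_neg, zpow_natCast]
  have : (2 : ℝ) ^ D ≤ ((∑ i ∈ s, 2 ^ (D - x i) : ℕ) : ℝ) := by
    rw [Nat.cast_sum, sum_congr rfl hterm, ← mul_sum]
    exact le_mul_of_one_le_right (by positivity) hsum
  exact_mod_cast this

theorem exists_lists_no_um_coloring_general (n : ℕ) (x : ℕ → ℕ)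
    (hmono : ∀ i ∈ Finset.Icc 1 n, ∀ j ∈ Finset.Icc 1 n, i ≤ j → x j ≤ x i)
    (hsum : 1 ≤ ∑ i ∈ Finset.Icc 1 n, (2 : ℝ) ^ (-(x i : ℤ))) :
    ∃ L : ℕ → Finset ℕ,
      (∀ i ∈ Finset.Icc 1 n, (L i).card = x i) ∧
      (∀ i ∈ Finset.Icc 1 n, ∀ c ∈ L i, 0 < c) ∧
      ¬ ∃ C : ℕ → ℕ, (∀ i ∈ Finset.Icc 1 n, C i ∈ L i) ∧
        ∀ s t : ℕ, 1 ≤ s → s ≤ t → t ≤ n →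
          ∃ v ∈ Finset.Icc s t, ∀ u ∈ Finset.Icc s t, u ≠ v → C u < C v := by
  have hD : ∀ i ∈ Icc 1 n, x i ≤ (Icc 1 n).sup x := fun i hi => le_sup hi
  exact exists_isBlockingFamily _ 1 n x hmono hD (two_pow_le_sum_two_pow_sub hD hsum)

/-- For positive integers `x₁ ≥ … ≥ xₙ` with `∑ 2^{-xᵢ} ≥ 1`, there exists a family of
lists of positive integers with `|L_i| = x_i` from which the discrete interval
hypergraph `H_n` admits no unique-maximum coloring. -/
theorem exists_lists_no_um_coloring (n : ℕ) (hn : 1 ≤ n) (x : ℕ → ℕ)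
    (hpos : ∀ i ∈ Finset.Icc 1 n, 0 < x i)
    (hmono : ∀ i ∈ Finset.Icc 1 n, ∀ j ∈ Finset.Icc 1 n, i ≤ j → x j ≤ x i)
    (hsum : 1 ≤ ∑ i ∈ Finset.Icc 1 n, (2 : ℝ) ^ (-(x i : ℤ))) :
    ∃ L : ℕ → Finset ℕ,
      (∀ i ∈ Finset.Icc 1 n, (L i).card = x i) ∧
      (∀ i ∈ Finset.Icc 1 n, ∀ c ∈ L i, 0 < c) ∧
      ¬ ∃ C : ℕ → ℕ, (∀ i ∈ Finset.Icc 1 n, C i ∈ L i) ∧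
        ∀ s t : ℕ, 1 ≤ s → s ≤ t → t ≤ n →
          ∃ v ∈ Finset.Icc s t, ∀ u ∈ Finset.Icc s t, u ≠ v → C u < C v :=
  exists_lists_no_um_coloring_general n x hmono hsum
end

section
/- Let H = (V, E) be a finite hypergraph and L = {L_v}_{v∈V} a family of lists of positive integers such that |L_v| ≥ min(deg_H(v) + 1, s(H)) for every v ∈ V, where deg_H(v) is the number of hyperedges containing v and s(H) is the least positive integer s with |E| ≤ s(s−1)/2. Then H admits a unique-maximum coloring from L. -/
/-- `sOf m` is the least positive integer `s` with `m ≤ s(s-1)/2`. -/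
noncomputable def sOf (m : ℕ) : ℕ := sInf {s : ℕ | 0 < s ∧ m ≤ s * (s - 1) / 2}

/-!
Induction on the number of edges. Let `M` be the largest colour in the lists of the vertices
lying on some edge, and give `M` to a vertex `u` of maximum degree among those whose list
contains `M`. Delete the edges through `u` and remove `M` from the lists of its neighbours; a
colouring of what remains extends, and each edge through `u` has its unique maximum at `u`.
A neighbour `v` loses one colour but also at least one edge. If its bound was `s(H)`, then
`deg u ≥ deg v ≥ s(H)`, and deleting at least `s - 1` of at most `s(s-1)/2` edges leaves at most
`(s-1)(s-2)/2`, so `s` drops by one as well.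
-/

open Finset

lemma sOf_spec (m : ℕ) : 0 < sOf m ∧ m ≤ sOf m * (sOf m - 1) / 2 := by
  refine Nat.sInf_mem (s := {s : ℕ | 0 < s ∧ m ≤ s * (s - 1) / 2}) ⟨m + 1, m.succ_pos, ?_⟩
  rw [Nat.triangle_succ]
  exact Nat.le_add_left m _

lemma sOf_pos (m : ℕ) : 0 < sOf m := (sOf_spec m).1

lemma sOf_le {m s : ℕ} (hs : 0 < s) (hm : m ≤ s * (s - 1) / 2) : sOf m ≤ s :=
  Nat.sInf_le ⟨hs, hm⟩

lemma sOf_mono {m n : ℕ} (h : m ≤ n) : sOf m ≤ sOf n :=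
  sOf_le (sOf_pos n) (h.trans (sOf_spec n).2)

lemma sOf_sub_lt {m d : ℕ} (hm : 0 < m) (hd : sOf m - 1 ≤ d) : sOf (m - d) < sOf m := by
  obtain ⟨hs, hle⟩ := sOf_spec m
  obtain ⟨t, ht⟩ : ∃ t, sOf m = t + 1 := Nat.exists_eq_add_one.2 hs
  rw [ht, Nat.triangle_succ] at hle
  have htpos : 0 < t := Nat.pos_of_ne_zero (by rintro rfl; simp at hle; omega)
  rw [ht] at hd ⊢
  exact Nat.lt_succ_of_le (sOf_le htpos (by omega))

namespace FinHypergraph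

variable {V α : Type*} [DecidableEq V]

def degree (E : Finset (Finset V)) (v : V) : ℕ := #(E.filter (v ∈ ·))

def IsUniqueMax [LT α] (E : Finset (Finset V)) (C : V → α) : Prop :=
  ∀ S ∈ E, S.Nonempty → ∃ v ∈ S, ∀ u ∈ S, u ≠ v → C u < C v

noncomputable def listSizeBound (E : Finset (Finset V)) (v : V) : ℕ :=
  min (degree E v + 1) (sOf #E)

variable {E E' : Finset (Finset V)} {S : Finset V} {u v : V}

lemma degree_mono (h : E' ⊆ E) (v : V) : degree E' v ≤ degree E v :=
  card_le_card (filter_subset_filter _ h)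

lemma degree_filter_notMem_lt (hS : S ∈ E) (hu : u ∈ S) (hv : v ∈ S) :
    degree (E.filter (u ∉ ·)) v < degree E v := by
  refine card_lt_card ((ssubset_iff_of_subset (filter_subset_filter _ (filter_subset _ _))).2
    ⟨S, mem_filter.2 ⟨hS, hv⟩, ?_⟩)
  simp [hu]

lemma card_filter_notMem_add_degree (E : Finset (Finset V)) (u : V) :
    #(E.filter (u ∉ ·)) + degree E u = #E := by
  rw [add_comm]
  exact card_filter_add_card_filter_not _

lemma listSizeBound_pos (E : Finset (Finset V)) (v : V) : 0 < listSizeBound E v :=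
  lt_min (Nat.succ_pos _) (sOf_pos _)

lemma listSizeBound_mono (h : E' ⊆ E) (v : V) : listSizeBound E' v ≤ listSizeBound E v :=
  min_le_min (Nat.succ_le_succ (degree_mono h v)) (sOf_mono (card_le_card h))

lemma listSizeBound_filter_notMem_add_one_le (hS : S ∈ E) (hu : u ∈ S) (hv : v ∈ S)
    (hdeg : degree E v ≤ degree E u) :
    listSizeBound (E.filter (u ∉ ·)) v + 1 ≤ listSizeBound E v := by
  have hlt := degree_filter_notMem_lt hS hu hv
  have hcard := card_filter_notMem_add_degree E u
  unfold listSizeBound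
  rcases le_or_gt (degree E v + 1) (sOf #E) with hsmall | hlarge
  · omega
  · have hm : 0 < #E := card_pos.2 ⟨S, hS⟩
    have hdrop := sOf_sub_lt hm (d := degree E u) (by omega)
    rw [show #E - degree E u = #(E.filter (u ∉ ·)) by omega] at hdrop
    omega

/-- The lists for the edges avoiding `u` once `u` takes the colour `c`. -/
def eraseAtNeighbors [DecidableEq α] (E : Finset (Finset V)) (L : V → Finset α) (u : V) (c : α)
    (v : V) : Finset α :=
  if v ≠ u ∧ ∃ S ∈ E, u ∈ S ∧ v ∈ S then (L v).erase c else L v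

lemma eraseAtNeighbors_subset [DecidableEq α] (L : V → Finset α) (c : α) (v : V) :
    eraseAtNeighbors E L u c v ⊆ L v := by
  unfold eraseAtNeighbors
  split_ifs
  exacts [erase_subset _ _, subset_rfl]

lemma listSizeBound_le_card_eraseAtNeighbors [DecidableEq α] {L : V → Finset α} {c : α}
    (hL : ∀ v, listSizeBound E v ≤ #(L v))
    (hdeg : ∀ v, c ∈ L v → (∃ S ∈ E, u ∈ S ∧ v ∈ S) → degree E v ≤ degree E u)
    (v : V) :
    listSizeBound (E.filter (u ∉ ·)) v ≤ #(eraseAtNeighbors E L u c v) := by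
  have hmono := (listSizeBound_mono (filter_subset (u ∉ ·) E) v).trans (hL v)
  unfold eraseAtNeighbors
  split_ifs with hv
  · by_cases hc : c ∈ L v
    · obtain ⟨S, hS, huS, hvS⟩ := hv.2
      have := listSizeBound_filter_notMem_add_one_le hS huS hvS (hdeg v hc hv.2)
      have := hL v
      rw [card_erase_of_mem hc]
      omega
    · rwa [erase_eq_of_notMem hc]
  · exact hmono

lemma IsUniqueMax.update [LT α] {C : V → α} {c : α} (hC : IsUniqueMax (E.filter (u ∉ ·)) C)
    (hlt : ∀ S ∈ E, u ∈ S → ∀ w ∈ S, w ≠ u → C w < c) :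
    IsUniqueMax E (Function.update C u c) := by
  intro S hS hne
  by_cases huS : u ∈ S
  · refine ⟨u, huS, fun w hw hwu => ?_⟩
    simpa [hwu] using hlt S hS huS w hw hwu
  · obtain ⟨v, hv, hmax⟩ := hC S (mem_filter.2 ⟨hS, huS⟩) hne
    have hne_u : ∀ w ∈ S, w ≠ u := fun w hw h => huS (h ▸ hw)
    refine ⟨v, hv, fun w hw hwv => ?_⟩
    simpa [hne_u w hw, hne_u v hv] using hmax w hw hwv

theorem exists_isUniqueMax_coloring [LinearOrder α] (E : Finset (Finset V)) (L : V → Finset α)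
    (hL : ∀ v, listSizeBound E v ≤ #(L v)) :
    ∃ C : V → α, (∀ v, C v ∈ L v) ∧ IsUniqueMax E C := by
  induction E using Finset.strongInduction generalizing L with
  | H E ih =>
  have hne (v : V) : (L v).Nonempty := card_pos.1 ((listSizeBound_pos E v).trans_le (hL v))
  have hmemU {v S} (hS : S ∈ E) (hv : v ∈ S) : v ∈ E.biUnion id :=
    mem_biUnion.2 ⟨S, hS, hv⟩
  rcases (E.biUnion id).eq_empty_or_nonempty with hU | ⟨w, hw⟩
  · choose C hC using hne
    refine ⟨C, hC, fun S hS ⟨v, hv⟩ => ?_⟩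
    simpa [hU] using hmemU hS hv
  set M := ((E.biUnion id).biUnion L).max' (Nonempty.biUnion ⟨w, hw⟩ fun v _ => hne v)
  have hle_M {v S c} (hS : S ∈ E) (hv : v ∈ S) (hc : c ∈ L v) : c ≤ M :=
    le_max' _ _ (mem_biUnion.2 ⟨v, hmemU hS hv, hc⟩)
  obtain ⟨w₀, hw₀, hMw₀⟩ := mem_biUnion.1 (max'_mem _ _ : M ∈ _)
  obtain ⟨u, hu, hmax⟩ := ((E.biUnion id).filter (M ∈ L ·)).exists_max_image (degree E)
    ⟨w₀, mem_filter.2 ⟨hw₀, hMw₀⟩⟩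
  obtain ⟨hu, hMu⟩ := mem_filter.1 hu
  obtain ⟨S₀, hS₀, huS₀⟩ := mem_biUnion.1 hu
  have hsub : E.filter (u ∉ ·) ⊂ E := filter_ssubset.2 ⟨S₀, hS₀, not_not.2 huS₀⟩
  obtain ⟨C, hCL, hC⟩ := ih _ hsub (eraseAtNeighbors E L u M)
    (listSizeBound_le_card_eraseAtNeighbors hL fun v hv ⟨S, hS, _, hvS⟩ =>
      hmax v (mem_filter.2 ⟨hmemU hS hvS, hv⟩))
  refine ⟨Function.update C u M, fun v => ?_, hC.update fun S hS huS w hwS hwu => ?_⟩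
  · rcases eq_or_ne v u with rfl | hvu
    · simpa using hMu
    · simpa [hvu] using eraseAtNeighbors_subset L M v (hCL v)
  · have hw := hCL w
    rw [eraseAtNeighbors, if_pos ⟨hwu, S, hS, huS, hwS⟩] at hw
    exact (hle_M hS hwS (mem_of_mem_erase hw)).lt_of_ne (ne_of_mem_erase hw)

end FinHypergraph

theorem um_coloring_from_lists_degree_general {V : Type} [DecidableEq V]
    (E : Finset (Finset V)) (L : V → Finset ℕ)
    (hsize : ∀ v : V,
      min ((E.filter (fun S => v ∈ S)).card + 1) (sOf E.card) ≤ (L v).card) :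
    ∃ C : V → ℕ, (∀ v, C v ∈ L v) ∧
      ∀ S ∈ E, S.Nonempty → ∃ v ∈ S, ∀ u ∈ S, u ≠ v → C u < C v :=
  FinHypergraph.exists_isUniqueMax_coloring E L hsize

/-- If every list `L_v` (of positive integers) satisfies
`|L_v| ≥ min(deg_H(v) + 1, s(H))`, then `H` admits a unique-maximum coloring
from the lists. -/
theorem um_coloring_from_lists_degree {V : Type} [Fintype V] [DecidableEq V]
    (E : Finset (Finset V)) (L : V → Finset ℕ)
    (hpos : ∀ v : V, ∀ c ∈ L v, 0 < c)
    (hsize : ∀ v : V,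
      min ((E.filter (fun S => v ∈ S)).card + 1) (sOf E.card) ≤ (L v).card) :
    ∃ C : V → ℕ, (∀ v, C v ∈ L v) ∧
      ∀ S ∈ E, S.Nonempty → ∃ v ∈ S, ∀ u ∈ S, u ≠ v → C u < C v :=
  um_coloring_from_lists_degree_general E L hsize
end

section
/- For every finite hypergraph H, the unique-maximum choice number satisfies χ^um_ch(H) ≤ Δ(H) + 1, where Δ(H) denotes the maximum vertex degree (maximum number of hyperedges containing a single vertex). -/
/-!
Greedy coloring from the top. Let `v` be a vertex lying in some edge whose list contains the
largest color `M` available to any vertex lying in an edge. Color `v` with `M` and delete `M`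
from the lists of all vertices sharing an edge with `v`; then every edge through `v` already has
its unique maximum at `v`, so these edges can be discarded. A vertex that loses a color loses at
least one edge as well, so "list larger than degree" survives and we recurse on the remaining
edges.
-/

open Finset

namespace Hypergraph

variable {V α : Type*} [DecidableEq V]

def vertexDegree (E : Finset (Finset V)) (v : V) : ℕ := #{S ∈ E | v ∈ S}

def IsUniqueMaxColoring [LT α] (E : Finset (Finset V)) (C : V → α) : Prop :=
  ∀ S ∈ E, S.Nonempty → ∃ v ∈ S, ∀ u ∈ S, u ≠ v → C u < C v

theorem vertexDegree_mono {E E' : Finset (Finset V)} (h : E' ⊆ E) (u : V) :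
    vertexDegree E' u ≤ vertexDegree E u :=
  card_le_card (filter_subset_filter _ h)

theorem vertexDegree_filter_not_mem_lt {E : Finset (Finset V)} {S : Finset V} {u v : V}
    (hS : S ∈ E) (hv : v ∈ S) (hu : u ∈ S) :
    vertexDegree {T ∈ E | v ∉ T} u < vertexDegree E u := by
  refine card_lt_card ⟨filter_subset_filter _ (filter_subset _ E), fun h => ?_⟩
  have := h (mem_filter.mpr ⟨hS, hu⟩)
  simp only [mem_filter] at this
  exact this.1.2 hv

theorem IsUniqueMaxColoring.update [LinearOrder α] {E : Finset (Finset V)} {C : V → α}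
    {v : V} {M : α} (hC : IsUniqueMaxColoring {S ∈ E | v ∉ S} C)
    (hlt : ∀ S ∈ E, v ∈ S → ∀ u ∈ S, u ≠ v → C u < M) :
    IsUniqueMaxColoring E (Function.update C v M) := by
  intro S hS hne
  by_cases hvS : v ∈ S
  · refine ⟨v, hvS, fun u hu huv => ?_⟩
    rw [Function.update_of_ne huv, Function.update_self]
    exact hlt S hS hvS u hu huv
  · obtain ⟨w, hw, hmax⟩ := hC S (mem_filter.mpr ⟨hS, hvS⟩) hne
    have hne_v : ∀ x ∈ S, x ≠ v := fun x hx h => hvS (h ▸ hx)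
    refine ⟨w, hw, fun u hu huw => ?_⟩
    rw [Function.update_of_ne (hne_v u hu), Function.update_of_ne (hne_v w hw)]
    exact hmax u hu huw

theorem exists_isUniqueMaxColoring [LinearOrder α] (E : Finset (Finset V)) (L : V → Finset α)
    (hL : ∀ v, vertexDegree E v < #(L v)) :
    ∃ C : V → α, (∀ v, C v ∈ L v) ∧ IsUniqueMaxColoring E C := by
  classical
  induction E using Finset.strongInduction generalizing L with
  | H E ih =>
  have hLne : ∀ v, (L v).Nonempty := fun v => card_pos.mp ((Nat.zero_le _).trans_lt (hL v))
  rcases (E.sup id).eq_empty_or_nonempty with hempty | ⟨w, hw⟩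
  · choose C hC using hLne
    refine ⟨C, hC, fun S hS ⟨u, hu⟩ => ?_⟩
    have : u ∈ E.sup id := mem_sup.mpr ⟨S, hS, hu⟩
    simp [hempty] at this
  obtain ⟨⟨v, M⟩, hvM, hmax⟩ := exists_max_image ((E.sup id).sigma L) Sigma.snd
    ⟨⟨w, (hLne w).choose⟩, mem_sigma.mpr ⟨hw, (hLne w).choose_spec⟩⟩
  obtain ⟨hv, hM⟩ := mem_sigma.mp hvM
  obtain ⟨S₀, hS₀, hvS₀⟩ := mem_sup.mp hv
  let L' : V → Finset α := fun u => if ∃ S ∈ E, v ∈ S ∧ u ∈ S then (L u).erase M else L u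
  have hL'L : ∀ u, L' u ⊆ L u := fun u => by
    unfold L'; split_ifs
    exacts [erase_subset _ _, Subset.rfl]
  have hL' : ∀ u, vertexDegree {S ∈ E | v ∉ S} u < #(L' u) := fun u => by
    unfold L'; split_ifs with hadj
    · obtain ⟨S, hS, hvS, huS⟩ := hadj
      have := vertexDegree_filter_not_mem_lt hS hvS huS
      have := pred_card_le_card_erase (a := M) (s := L u)
      have := hL u
      omega
    · exact (vertexDegree_mono (filter_subset _ E) u).trans_lt (hL u)
  obtain ⟨C, hCL', hC⟩ :=
    ih _ (filter_ssubset.mpr ⟨S₀, hS₀, not_not.mpr hvS₀⟩) L' hL'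
  refine ⟨Function.update C v M, fun u => ?_, hC.update fun S hS hvS u hu huv => ?_⟩
  · rcases eq_or_ne u v with rfl | huv
    · simpa using hM
    · simpa [Function.update_of_ne huv] using hL'L u (hCL' u)
  · have hCu : C u ∈ (L u).erase M := by
      simpa [L', show ∃ S ∈ E, v ∈ S ∧ u ∈ S from ⟨S, hS, hvS, hu⟩] using hCL' u
    have hle : C u ≤ M :=
      hmax ⟨u, C u⟩ (mem_sigma.mpr ⟨mem_sup.mpr ⟨S, hS, hu⟩, mem_of_mem_erase hCu⟩)
    exact hle.lt_of_ne (ne_of_mem_erase hCu)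

end Hypergraph

theorem um_choice_le_max_degree_add_one_general {V : Type} [Fintype V] [DecidableEq V]
    (E : Finset (Finset V)) (L : V → Finset ℕ)
    (hsize : ∀ v : V,
      (Finset.univ.sup fun u => (E.filter (fun S => u ∈ S)).card) + 1 ≤ (L v).card) :
    ∃ C : V → ℕ, (∀ v, C v ∈ L v) ∧
      ∀ S ∈ E, S.Nonempty → ∃ v ∈ S, ∀ u ∈ S, u ≠ v → C u < C v :=
  Hypergraph.exists_isUniqueMaxColoring E L fun v =>
    (Finset.le_sup (f := Hypergraph.vertexDegree E) (mem_univ v)).trans_lt (hsize v)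

/-- The unique-maximum choice number of a finite hypergraph is at most `Δ(H) + 1`:
for every family of lists (of positive integers) each of size at least `Δ(H) + 1`,
`H` admits a unique-maximum coloring from the lists. -/
theorem um_choice_le_max_degree_add_one {V : Type} [Fintype V] [DecidableEq V]
    (E : Finset (Finset V)) (L : V → Finset ℕ)
    (hpos : ∀ v : V, ∀ c ∈ L v, 0 < c)
    (hsize : ∀ v : V,
      (Finset.univ.sup fun u => (E.filter (fun S => u ∈ S)).card) + 1 ≤ (L v).card) :
    ∃ C : V → ℕ, (∀ v, C v ∈ L v) ∧
      ∀ S ∈ E, S.Nonempty → ∃ v ∈ S, ∀ u ∈ S, u ≠ v → C u < C v :=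
  um_choice_le_max_degree_add_one_general E L hsize
end

section
/- Let C be a class of colorings of hypergraphs with the refinement property (any refinement of a coloring in C is in C). For every hypergraph H with n vertices, the C-choice number satisfies ch_C(H) ≤ χ_C(H)·ln n + 1. -/
/-!
Fix an optimal coloring `C` in the class with `r` colors and lists of size `k > r ln n`.
Map every color of the lists uniformly at random to one of the `r` color classes of `C`. A
vertex `v` is unlucky if no color of its list lands in the class of `v`, which happens with
probability at most `(1 - 1/r)^k ≤ e^{-k/r} < 1/n`; by the union bound some map leaves no vertex
unlucky. Giving each vertex a color of its list that lands in its own class yields a list coloring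
that refines `C`, hence lies in the class.
-/

open Finset

section Counting

variable {α β : Type*} [Fintype α] [DecidableEq α] [Fintype β] [DecidableEq β]

theorem card_filter_forall_mem_ne (s : Finset α) (t : β) :
    #{g : α → β | ∀ a ∈ s, g a ≠ t} = (Fintype.card β - 1) ^ #s * Fintype.card β ^ #sᶜ := by
  have h : ({g : α → β | ∀ a ∈ s, g a ≠ t} : Finset (α → β)) =
      Fintype.piFinset fun a => if a ∈ s then univ.erase t else univ := by
    ext g
    simp only [mem_filter, mem_univ, true_and, Fintype.mem_piFinset]
    refine ⟨fun hg a => ?_, fun hg a ha => by simpa [ha] using hg a⟩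
    split_ifs with ha
    · simpa using hg a ha
    · exact mem_univ _
  simp only [h, Fintype.card_piFinset, apply_ite card, card_erase_of_mem (mem_univ t), card_univ]
  rw [prod_ite, prod_const, prod_const, filter_mem_eq_inter, univ_inter, filter_not,
    ← compl_eq_univ_sdiff, filter_univ_mem]

theorem card_filter_forall_mem_ne_mul_pow_le (s : Finset α) (t : β) {k : ℕ} (hk : k ≤ #s) :
    #{g : α → β | ∀ a ∈ s, g a ≠ t} * Fintype.card β ^ k ≤
      (Fintype.card β - 1) ^ k * Fintype.card β ^ Fintype.card α := by
  set q := Fintype.card β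
  obtain ⟨j, hj⟩ := Nat.exists_eq_add_of_le hk
  have hα : Fintype.card α = k + j + #sᶜ := by rw [← hj, card_add_card_compl]
  rw [card_filter_forall_mem_ne, hj, hα, pow_add, pow_add, pow_add]
  calc (q - 1) ^ k * (q - 1) ^ j * q ^ #sᶜ * q ^ k
      ≤ (q - 1) ^ k * q ^ j * q ^ #sᶜ * q ^ k := by gcongr; exact Nat.sub_le q 1
    _ = (q - 1) ^ k * (q ^ k * q ^ j * q ^ #sᶜ) := by ring

theorem exists_map_forall_exists_mem_eq [Nonempty β] {V : Type*} [Fintype V] (c : V → β)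
    (L : V → Finset α) {k : ℕ} (hL : ∀ v, k ≤ #(L v))
    (hk : Fintype.card V * (Fintype.card β - 1) ^ k < Fintype.card β ^ k) :
    ∃ g : α → β, ∀ v, ∃ a ∈ L v, g a = c v := by
  set q := Fintype.card β
  set bad : V → Finset (α → β) := fun v => {g | ∀ a ∈ L v, g a ≠ c v}
  have hcard : #(univ.biUnion bad) < #(univ : Finset (α → β)) := by
    refine Nat.lt_of_mul_lt_mul_right (a := q ^ k) ?_
    calc #(univ.biUnion bad) * q ^ k
        ≤ (∑ v, #(bad v)) * q ^ k := by gcongr; exact card_biUnion_le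
      _ ≤ ∑ _v : V, (q - 1) ^ k * q ^ Fintype.card α := by
          rw [sum_mul]
          exact sum_le_sum fun v _ => card_filter_forall_mem_ne_mul_pow_le _ _ (hL v)
      _ = Fintype.card V * (q - 1) ^ k * q ^ Fintype.card α := by
          rw [sum_const, card_univ, smul_eq_mul, mul_assoc]
      _ < q ^ k * q ^ Fintype.card α := by gcongr
      _ = #(univ : Finset (α → β)) * q ^ k := by
          rw [card_univ, Fintype.card_fun, mul_comm]
  obtain ⟨g, -, hg⟩ := exists_mem_notMem_of_card_lt_card hcard
  refine ⟨g, fun v => ?_⟩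
  by_contra! h
  exact hg (mem_biUnion.2 ⟨v, mem_univ v, mem_filter.2 ⟨mem_univ g, h⟩⟩)

end Counting

theorem exists_refinement_mem_lists {V α β : Type*} [Fintype V] [DecidableEq α] [Fintype β]
    [DecidableEq β] (c : V → β) (L : V → Finset α) {k : ℕ} (hL : ∀ v, k ≤ #(L v))
    (hk : Fintype.card V * (Fintype.card β - 1) ^ k < Fintype.card β ^ k) :
    ∃ f : V → α, (∀ v, f v ∈ L v) ∧ ∀ x y, c x ≠ c y → f x ≠ f y := by
  cases isEmpty_or_nonempty V
  · exact ⟨isEmptyElim, isEmptyElim, isEmptyElim⟩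
  have : Nonempty β := .map c inferInstance
  set S := univ.biUnion L
  have hLS : ∀ v, L v ⊆ S := fun v => subset_biUnion_of_mem L (mem_univ v)
  have hL' : ∀ v, k ≤ #((L v).subtype (· ∈ S)) := fun v => by
    rw [card_subtype, filter_true_of_mem (hLS v)]
    exact hL v
  obtain ⟨g, hg⟩ := exists_map_forall_exists_mem_eq c (fun v => (L v).subtype (· ∈ S)) hL' hk
  choose f hfL hfc using hg
  refine ⟨fun v => f v, fun v => mem_subtype.1 (hfL v), fun x y hxy hf => hxy ?_⟩
  rw [← hfc x, ← hfc y, Subtype.ext hf]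

theorem nat_mul_pow_sub_one_lt_pow {n r k : ℕ} (hr : 0 < r) (hk : r * Real.log n < k) :
    n * (r - 1) ^ k < r ^ k := by
  rcases n.eq_zero_or_pos with rfl | hn
  · simpa using pow_pos hr k
  have hr' : (0 : ℝ) < r := by exact_mod_cast hr
  have hlog : Real.log n < k / r := by rwa [lt_div_iff₀ hr', mul_comm]
  have key : (n : ℝ) * (1 - 1 / r) ^ k < 1 :=
    calc (n : ℝ) * (1 - 1 / r) ^ k ≤ n * Real.exp (-(1 / r)) ^ k := by
          gcongr
          · rw [sub_nonneg, div_le_one hr']; exact_mod_cast hr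
          · linarith [Real.add_one_le_exp (-(1 / r))]
      _ = n * Real.exp (-(k / r)) := by rw [← Real.exp_nat_mul]; ring_nf
      _ < n * Real.exp (-Real.log n) := by gcongr
      _ = 1 := by rw [Real.exp_neg, Real.exp_log (by positivity)]; field_simp
  have hsub : ((r - 1 : ℕ) : ℝ) = r * (1 - 1 / r) := by
    rw [Nat.cast_sub hr]; field_simp; simp
  suffices (n : ℝ) * ((r - 1 : ℕ) : ℝ) ^ k < (r : ℝ) ^ k by exact_mod_cast this
  rw [hsub, mul_pow, mul_left_comm]
  exact mul_lt_of_lt_one_right (by positivity) key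

theorem choice_le_chromatic_mul_log_refinement_general {V : Type} [Fintype V]
    (P : (V → ℕ) → Prop)
    (href : ∀ C C' : V → ℕ, P C → (∀ x y : V, C x ≠ C y → C' x ≠ C' y) → P C')
    (C0 : V → ℕ) (hC0 : P C0) :
    ((sInf {k : ℕ | ∀ L : V → Finset ℕ, (∀ v, k ≤ (L v).card) →
        ∃ C : V → ℕ, (∀ v, C v ∈ L v) ∧ P C} : ℕ) : ℝ)
      ≤ ((sInf {k : ℕ | ∃ C : V → ℕ, (∀ v, C v ∈ Finset.Icc 1 k) ∧ P C} : ℕ) : ℝ)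
          * Real.log (Fintype.card V) + 1 := by
  set r := sInf {k : ℕ | ∃ C : V → ℕ, (∀ v, C v ∈ Finset.Icc 1 k) ∧ P C}
  have hinj : ∃ C : V → ℕ, (∀ v, C v ∈ Icc 1 (Fintype.card V)) ∧ P C := by
    let e := Fintype.equivFin V
    refine ⟨fun v => e v + 1, fun v => by simp [Nat.succ_le_of_lt (e v).isLt], ?_⟩
    exact href C0 _ hC0 fun x y hxy h =>
      hxy (congrArg C0 (e.injective (Fin.ext (by simpa using h))))
  obtain ⟨C, hC, hPC⟩ : r ∈ {k : ℕ | ∃ C : V → ℕ, (∀ v, C v ∈ Icc 1 k) ∧ P C} :=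
    Nat.sInf_mem ⟨_, hinj⟩
  set k := ⌊r * Real.log (Fintype.card V)⌋₊ + 1
  have hk : k ∈ {k : ℕ | ∀ L : V → Finset ℕ, (∀ v, k ≤ #(L v)) →
      ∃ C : V → ℕ, (∀ v, C v ∈ L v) ∧ P C} := by
    intro L hL
    rcases r.eq_zero_or_pos with hr | hr
    · exact ⟨C, fun v => absurd (hC v) (by simp [hr]), hPC⟩
    have hcard : Fintype.card (Icc 1 r) = r := by simp
    have hkr : r * Real.log (Fintype.card V) < k := by simpa [k] using Nat.lt_floor_add_one _
    obtain ⟨f, hfL, hCf⟩ := exists_refinement_mem_lists (fun v => (⟨C v, hC v⟩ : Icc 1 r)) L hL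
      (by rw [hcard]; exact nat_mul_pow_sub_one_lt_pow hr hkr)
    exact ⟨f, hfL, href C f hPC fun x y h => hCf x y (by simpa using h)⟩
  calc _ ≤ (k : ℝ) := by exact_mod_cast Nat.sInf_le hk
    _ ≤ r * Real.log (Fintype.card V) + 1 := by
      simp only [k, Nat.cast_add, Nat.cast_one]
      gcongr
      exact Nat.floor_le (by positivity)

/-- For a class of colorings `P` (of a hypergraph on vertex set `V`) with the
refinement property, and which contains at least one coloring, the `P`-choice
number is at most `χ_P(H) · ln n + 1`, where `n` is the number of vertices.
The choice number and the chromatic number are expressed as infima. -/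
theorem choice_le_chromatic_mul_log_refinement {V : Type} [Fintype V] [DecidableEq V]
    (P : (V → ℕ) → Prop)
    (href : ∀ C C' : V → ℕ, P C → (∀ x y : V, C x ≠ C y → C' x ≠ C' y) → P C')
    (C0 : V → ℕ) (hC0 : P C0) :
    ((sInf {k : ℕ | ∀ L : V → Finset ℕ, (∀ v, k ≤ (L v).card) →
        ∃ C : V → ℕ, (∀ v, C v ∈ L v) ∧ P C} : ℕ) : ℝ)
      ≤ ((sInf {k : ℕ | ∃ C : V → ℕ, (∀ v, C v ∈ Finset.Icc 1 k) ∧ P C} : ℕ) : ℝ)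
          * Real.log (Fintype.card V) + 1 :=
  choice_le_chromatic_mul_log_refinement_general P href C0 hC0
end

section
/- For every hypergraph H with n vertices, the (proper) choice number satisfies ch(H) ≤ χ(H)·ln n + 1. -/
open Finset

lemma key_coloring {V : Type} [Fintype V] [DecidableEq V]
    (E : Finset (Finset V)) (t k : ℕ)
    (f : V → ℕ) (hf : ∀ v, f v ∈ Finset.Icc 1 t)
    (hprop : ∀ S ∈ E, 2 ≤ S.card → ∃ u ∈ S, ∃ w ∈ S, f u ≠ f w)
    (hcount : Fintype.card V * (t-1)^k < t^k)
    (L : V → Finset ℕ) (hL : ∀ v, k ≤ (L v).card) :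
    ∃ C : V → ℕ, (∀ v, C v ∈ L v) ∧
      ∀ S ∈ E, 2 ≤ S.card → ∃ u ∈ S, ∃ w ∈ S, C u ≠ C w := by
  cases isEmpty_or_nonempty V with
  | inl h =>
    exact ⟨fun v => (h.false v).elim, fun v => (h.false v).elim,
      fun S hS h2 => by
        have : S = ∅ := Finset.eq_empty_of_isEmpty S
        simp [this] at h2⟩
  | inr hne =>
    have ht : 1 ≤ t := by
      obtain ⟨v0⟩ := hne
      exact (Finset.mem_Icc.mp (hf v0)).1.trans (Finset.mem_Icc.mp (hf v0)).2
    -- shrink lists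
    choose L' hL'sub hL'card using fun v => Finset.exists_subset_card_eq (hL v)
    set U : Finset ℕ := Finset.univ.biUnion L' with hU
    have hL'U : ∀ v, L' v ⊆ U := fun v => Finset.subset_biUnion_of_mem L' (Finset.mem_univ v)
    have hkU : k ≤ U.card := by
      obtain ⟨v0⟩ := hne
      calc k = (L' v0).card := (hL'card v0).symm
        _ ≤ U.card := Finset.card_le_card (hL'U v0)
    set T : Finset (↥U → ℕ) := Fintype.piFinset (fun _ => Finset.Icc 1 t) with hT
    set Bad : V → Finset (↥U → ℕ) := fun v =>
      Fintype.piFinset (fun a => if (a : ℕ) ∈ L' v then (Finset.Icc 1 t).erase (f v) else Finset.Icc 1 t) with hBad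
    have hTcard : T.card = t ^ U.card := by
      rw [hT, Fintype.card_piFinset]
      simp [Fintype.card_coe]
    have hBadcard : ∀ v, (Bad v).card = (t-1)^k * t^(U.card - k) := by
      intro v
      rw [hBad, Fintype.card_piFinset]
      have : ∀ a : ↥U, ((if (a:ℕ) ∈ L' v then (Finset.Icc 1 t).erase (f v) else Finset.Icc 1 t).card)
          = if (a:ℕ) ∈ L' v then t - 1 else t := by
        intro a
        split <;> simp [Finset.card_erase_of_mem (hf v)]
      rw [Finset.prod_congr rfl (fun a _ => this a)]
      rw [Finset.prod_coe_sort U (fun c => if c ∈ L' v then t - 1 else t)]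
      rw [Finset.prod_ite, Finset.prod_const, Finset.prod_const]
      have h1 : U.filter (· ∈ L' v) = L' v := by
        rw [Finset.filter_mem_eq_inter, Finset.inter_eq_right.mpr (hL'U v)]
      have h2 : (U.filter (fun c => ¬ c ∈ L' v)).card = U.card - k := by
        have := Finset.card_filter_add_card_filter_not (s := U) (p := (· ∈ L' v))
        rw [h1, hL'card v] at this
        omega
      rw [h1, hL'card v, h2]
    -- there is a good g
    have hgood : ∃ g ∈ T, ∀ v, g ∉ Bad v := by
      by_contra hcon
      push_neg at hcon
      have hsub : T ⊆ Finset.univ.biUnion Bad := by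
        intro g hg
        obtain ⟨v, hv⟩ := hcon g hg
        exact Finset.mem_biUnion.mpr ⟨v, Finset.mem_univ v, hv⟩
      have := Finset.card_le_card hsub
      have hle : (Finset.univ.biUnion Bad).card ≤ Fintype.card V * ((t-1)^k * t^(U.card - k)) := by
        calc (Finset.univ.biUnion Bad).card ≤ ∑ v, (Bad v).card := Finset.card_biUnion_le
          _ = Fintype.card V * ((t-1)^k * t^(U.card - k)) := by
              rw [Finset.sum_congr rfl (fun v _ => hBadcard v)]
              rw [Finset.sum_const, smul_eq_mul, Finset.card_univ]
      rw [hTcard] at this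
      have hsplit : t ^ U.card = t^k * t^(U.card - k) := by
        rw [← pow_add]; congr 1; omega
      have hpos : 0 < t^(U.card - k) := Nat.pow_pos ht
      nlinarith [this.trans hle]
    obtain ⟨g, hgT, hgB⟩ := hgood
    have hgIcc : ∀ a : ↥U, g a ∈ Finset.Icc 1 t := by
      intro a
      exact (Fintype.mem_piFinset.mp hgT) a
    have hex : ∀ v, ∃ a : ↥U, (a : ℕ) ∈ L' v ∧ g a = f v := by
      intro v
      have := hgB v
      rw [hBad, Fintype.mem_piFinset] at this
      push_neg at this
      obtain ⟨a, ha⟩ := this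
      by_cases hm : (a : ℕ) ∈ L' v
      · rw [if_pos hm] at ha
        refine ⟨a, hm, ?_⟩
        by_contra hne'
        exact ha (Finset.mem_erase.mpr ⟨hne', hgIcc a⟩)
      · rw [if_neg hm] at ha
        exact absurd (hgIcc a) ha
    choose a ha1 ha2 using hex
    refine ⟨fun v => (a v : ℕ), fun v => hL'sub v (ha1 v), ?_⟩
    intro S hS h2
    obtain ⟨u, hu, w, hw, hne'⟩ := hprop S hS h2
    refine ⟨u, hu, w, hw, ?_⟩
    intro heq
    apply hne'
    have : a u = a w := Subtype.ext heq
    rw [← ha2 u, ← ha2 w, this]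

/-- For every hypergraph `H` with `n` vertices, the (proper) choice number is at
most `χ(H) · ln n + 1`. -/
theorem choice_le_chromatic_mul_log {V : Type} [Fintype V] [DecidableEq V]
    (E : Finset (Finset V)) :
    ((sInf {k : ℕ | ∀ L : V → Finset ℕ, (∀ v, k ≤ (L v).card) →
        ∃ C : V → ℕ, (∀ v, C v ∈ L v) ∧
          ∀ S ∈ E, 2 ≤ S.card → ∃ u ∈ S, ∃ w ∈ S, C u ≠ C w} : ℕ) : ℝ)
      ≤ ((sInf {k : ℕ | ∃ C : V → ℕ, (∀ v, C v ∈ Finset.Icc 1 k) ∧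
          ∀ S ∈ E, 2 ≤ S.card → ∃ u ∈ S, ∃ w ∈ S, C u ≠ C w} : ℕ) : ℝ)
          * Real.log (Fintype.card V) + 1 := by
  set n := Fintype.card V with hn
  cases isEmpty_or_nonempty V with
  | inl h =>
    have h0 : (0 : ℕ) ∈ {k : ℕ | ∀ L : V → Finset ℕ, (∀ v, k ≤ (L v).card) →
        ∃ C : V → ℕ, (∀ v, C v ∈ L v) ∧
          ∀ S ∈ E, 2 ≤ S.card → ∃ u ∈ S, ∃ w ∈ S, C u ≠ C w} := by
      intro L hL
      refine ⟨fun v => (h.false v).elim, fun v => (h.false v).elim, fun S hS h2 => ?_⟩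
      have : S = ∅ := Finset.eq_empty_of_isEmpty S
      simp [this] at h2
    have : sInf {k : ℕ | ∀ L : V → Finset ℕ, (∀ v, k ≤ (L v).card) →
        ∃ C : V → ℕ, (∀ v, C v ∈ L v) ∧
          ∀ S ∈ E, 2 ≤ S.card → ∃ u ∈ S, ∃ w ∈ S, C u ≠ C w} = 0 :=
      Nat.le_zero.mp (Nat.sInf_le h0)
    rw [this]
    push_cast
    positivity
  | inr hV =>
    have hn1 : 1 ≤ n := Fintype.card_pos
    -- the chromatic set
    set chrSet := {k : ℕ | ∃ C : V → ℕ, (∀ v, C v ∈ Finset.Icc 1 k) ∧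
          ∀ S ∈ E, 2 ≤ S.card → ∃ u ∈ S, ∃ w ∈ S, C u ≠ C w} with hchrSet
    have hchr_ne : chrSet.Nonempty := by
      refine ⟨n, fun v => ((Fintype.equivFin V) v : ℕ) + 1, fun v => ?_, fun S hS h2 => ?_⟩
      · rw [Finset.mem_Icc]
        exact ⟨Nat.succ_le_succ (Nat.zero_le _), Nat.succ_le_of_lt ((Fintype.equivFin V) v).isLt⟩
      · obtain ⟨u, hu, w, hw, huw⟩ := Finset.one_lt_card.mp h2
        refine ⟨u, hu, w, hw, fun heq => huw ?_⟩
        have heq' : ((Fintype.equivFin V) u : ℕ) + 1 = ((Fintype.equivFin V) w : ℕ) + 1 := heq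
        have : (Fintype.equivFin V) u = (Fintype.equivFin V) w := Fin.ext (by omega)
        exact (Fintype.equivFin V).injective this
    set t := sInf chrSet with hts
    obtain ⟨f, hf, hprop⟩ : t ∈ chrSet := Nat.sInf_mem hchr_ne
    have ht1 : 1 ≤ t := by
      obtain ⟨v0⟩ := hV
      exact (Finset.mem_Icc.mp (hf v0)).1.trans (Finset.mem_Icc.mp (hf v0)).2
    set k := ⌊(t : ℝ) * Real.log n⌋₊ + 1 with hk
    have hlogn : (0:ℝ) ≤ Real.log n := Real.log_nonneg (by exact_mod_cast hn1)
    have hxk : (t : ℝ) * Real.log n < k := by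
      rw [hk]
      push_cast
      exact Nat.lt_floor_add_one _
    have hcount : n * (t-1)^k < t^k := by
      rcases Nat.lt_or_ge t 2 with h2 | h2
      · have h1 : t = 1 := by omega
        have hk0 : 0 < k := by omega
        rw [h1]
        simp [Nat.zero_pow hk0]
      · -- real analysis
        have ht0 : (0:ℝ) < t := by positivity
        have hq : ((t:ℝ) - 1) / t ≤ Real.exp (-(1/t)) := by
          have := Real.add_one_le_exp (-(1/(t:ℝ)))
          have h' : 1 - 1/(t:ℝ) ≤ Real.exp (-(1/t)) := by linarith
          calc ((t:ℝ) - 1)/t = 1 - 1/t := by field_simp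
            _ ≤ _ := h'
        have hqnn : (0:ℝ) ≤ ((t:ℝ)-1)/t := by
          apply div_nonneg _ ht0.le
          have : (2:ℝ) ≤ t := by exact_mod_cast h2
          linarith
        have hpow : (((t:ℝ)-1)/t)^k ≤ Real.exp (-(1/t))^k := pow_le_pow_left₀ hqnn hq k
        have hexp : Real.exp (-(1/(t:ℝ)))^k = Real.exp (-(k/t)) := by
          rw [← Real.exp_nat_mul]
          congr 1
          field_simp
        have hlt : Real.exp (-((k:ℝ)/t)) < Real.exp (-(Real.log n)) := by
          apply Real.exp_lt_exp.mpr
          rw [neg_lt_neg_iff]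
          rw [lt_div_iff₀ ht0]
          calc Real.log n * t = t * Real.log n := by ring
            _ < k := hxk
        have hexplog : Real.exp (-(Real.log n)) = 1 / n := by
          rw [Real.exp_neg, Real.exp_log (by exact_mod_cast hn1 : (0:ℝ) < n)]
          ring
        have hfinal : (n:ℝ) * (((t:ℝ)-1)/t)^k < 1 := by
          have hnpos : (0:ℝ) < n := by exact_mod_cast hn1
          calc (n:ℝ) * (((t:ℝ)-1)/t)^k ≤ n * Real.exp (-(1/t))^k := by
                apply mul_le_mul_of_nonneg_left hpow hnpos.le
            _ = n * Real.exp (-((k:ℝ)/t)) := by rw [hexp]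
            _ < n * (1/n) := by
                apply mul_lt_mul_of_pos_left _ hnpos
                rw [← hexplog]; exact hlt
            _ = 1 := by field_simp
        have hcast : ((t - 1 : ℕ):ℝ) = (t:ℝ) - 1 := by
          have : (1:ℕ) ≤ t := ht1
          push_cast [this]
          ring
        have : (n:ℝ) * ((t-1:ℕ):ℝ)^k < (t:ℝ)^k := by
          rw [hcast]
          have htk : (0:ℝ) < (t:ℝ)^k := by positivity
          rw [div_pow, ← mul_div_assoc, div_lt_one htk] at hfinal
          linarith [hfinal]
        exact_mod_cast this
    have hkmem : k ∈ {k : ℕ | ∀ L : V → Finset ℕ, (∀ v, k ≤ (L v).card) →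
        ∃ C : V → ℕ, (∀ v, C v ∈ L v) ∧
          ∀ S ∈ E, 2 ≤ S.card → ∃ u ∈ S, ∃ w ∈ S, C u ≠ C w} := by
      intro L hL
      exact key_coloring E t k f hf hprop hcount L hL
    have hinf : sInf {k : ℕ | ∀ L : V → Finset ℕ, (∀ v, k ≤ (L v).card) →
        ∃ C : V → ℕ, (∀ v, C v ∈ L v) ∧
          ∀ S ∈ E, 2 ≤ S.card → ∃ u ∈ S, ∃ w ∈ S, C u ≠ C w} ≤ k := Nat.sInf_le hkmem
    calc ((sInf _ : ℕ) : ℝ) ≤ (k : ℝ) := by exact_mod_cast hinf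
      _ ≤ (t : ℝ) * Real.log n + 1 := by
          rw [hk]
          push_cast
          have := Nat.floor_le (by positivity : (0:ℝ) ≤ (t:ℝ) * Real.log n)
          linarith
end

section
/- Let χ_C(H) = k and suppose every vertex list has size k* > k·ln n, where n = |V|. If each color in the union of all lists is assigned independently and uniformly at random to one of the k color classes of an optimal C-coloring, then with positive probability, for every vertex v the sub-list L'_v (colors of L_v assigned to v's class) is nonempty. -/
/-!
Union bound. For a vertex `v`, the assignments sending no colour of `L v` to the class of `v`
are a fraction `(1 - 1/k)^k*` of all assignments. Since `1 - 1/k ≤ exp (-1/k)` and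
`k* > k ln n`, this fraction is below `1/n`, so the `n` bad events cannot cover everything.
-/

open Finset Real

theorem card_filter_forall_mem_apply_ne {α β : Type*} [Fintype α] [DecidableEq α]
    [Fintype β] [DecidableEq β] (A : Finset α) (x : β) :
    #{g : α → β | ∀ a ∈ A, g a ≠ x} =
      (Fintype.card β - 1) ^ #A * Fintype.card β ^ (Fintype.card α - #A) := by
  have hpi : ({g : α → β | ∀ a ∈ A, g a ≠ x} : Finset (α → β)) =
      Fintype.piFinset fun a => if a ∈ A then univ.erase x else univ := by
    ext g
    simp only [mem_filter, mem_univ, true_and, Fintype.mem_piFinset]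
    refine forall_congr' fun a => ?_
    split_ifs <;> simp [*]
  rw [hpi, Fintype.card_piFinset]
  simp only [apply_ite card]
  rw [prod_ite, prod_const, prod_const, card_erase_of_mem (mem_univ x), card_univ]
  simp [filter_not, card_sdiff]

theorem exists_forall_exists_mem_apply_eq {ι α β : Type*} [Fintype ι] [Fintype α]
    [DecidableEq α] [Fintype β] [DecidableEq β] [Nonempty β]
    (A : ι → Finset α) (t : ι → β) {m : ℕ} (hA : ∀ i, #(A i) = m)
    (h : Fintype.card ι * (Fintype.card β - 1) ^ m < Fintype.card β ^ m) :
    ∃ g : α → β, ∀ i, ∃ a ∈ A i, g a = t i := by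
  set b := Fintype.card β
  set N := Fintype.card α
  let Bad : ι → Finset (α → β) := fun i => {g | ∀ a ∈ A i, g a ≠ t i}
  by_contra! hcover
  have hbad (i : ι) : #(Bad i) * b ^ m = (b - 1) ^ m * b ^ N := by
    have hm : m ≤ N := hA i ▸ card_le_univ (A i)
    rw [card_filter_forall_mem_apply_ne, hA, mul_assoc, ← pow_add, Nat.sub_add_cancel hm]
  have hunion : b ^ N ≤ ∑ i, #(Bad i) := calc
    b ^ N = #(univ : Finset (α → β)) := by simp [b, N]
    _ ≤ #(univ.biUnion Bad) := card_le_card fun g _ => by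
      obtain ⟨i, hi⟩ := hcover g
      exact mem_biUnion.2 ⟨i, mem_univ i, mem_filter.2 ⟨mem_univ g, hi⟩⟩
    _ ≤ ∑ i, #(Bad i) := card_biUnion_le
  have hbN : 0 < b ^ N := pow_pos Fintype.card_pos N
  have : b ^ N * b ^ m < b ^ N * b ^ m := calc
    b ^ N * b ^ m ≤ (∑ i, #(Bad i)) * b ^ m := Nat.mul_le_mul_right _ hunion
    _ = Fintype.card ι * (b - 1) ^ m * b ^ N := by simp [sum_mul, hbad, mul_assoc]
    _ < b ^ m * b ^ N := Nat.mul_lt_mul_of_pos_right h hbN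
    _ = b ^ N * b ^ m := mul_comm _ _
  exact lt_irrefl _ this

theorem mul_sub_one_pow_lt_pow_of_mul_log_lt {n k m : ℕ} (hk : 0 < k)
    (h : k * log n < m) : n * (k - 1) ^ m < k ^ m := by
  rcases n.eq_zero_or_pos with rfl | hn
  · simpa using pow_pos hk m
  have hkR : (0 : ℝ) < k := by exact_mod_cast hk
  have hnR : (0 : ℝ) < n := by exact_mod_cast hn
  have hratio : ((k : ℝ) - 1) / k ≤ exp (-1 / k) := calc
    ((k : ℝ) - 1) / k = -1 / k + 1 := by field_simp; ring
    _ ≤ exp (-1 / k) := add_one_le_exp _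
  have hfrac : (((k : ℝ) - 1) / k) ^ m < (n : ℝ)⁻¹ := calc
    (((k : ℝ) - 1) / k) ^ m ≤ exp (-1 / k) ^ m :=
      pow_le_pow_left₀ (div_nonneg (sub_nonneg.2 (Nat.one_le_cast.2 hk)) hkR.le) hratio m
    _ = exp (-(m / k)) := by rw [← exp_nat_mul]; ring_nf
    _ < exp (-log n) := exp_lt_exp.2 (neg_lt_neg ((lt_div_iff₀ hkR).2 (by linarith)))
    _ = (n : ℝ)⁻¹ := by rw [exp_neg, exp_log hnR]
  rw [div_pow, div_lt_iff₀ (by positivity)] at hfrac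
  rw [← Nat.cast_lt (α := ℝ)]
  push_cast [Nat.cast_sub hk]
  calc (n : ℝ) * ((k : ℝ) - 1) ^ m < n * ((n : ℝ)⁻¹ * k ^ m) := mul_lt_mul_of_pos_left hfrac hnR
    _ = k ^ m := by field_simp

theorem exists_assignment_lists_nonempty_general {V : Type} [Fintype V]
    (k : ℕ) (cl : V → Fin k) (L : V → Finset ℕ) (kstar : ℕ)
    (hsize : ∀ v : V, (L v).card = kstar)
    (hk : (k : ℝ) * Real.log (Fintype.card V) < (kstar : ℝ)) :
    0 < Nat.card {g : {c : ℕ // c ∈ Finset.univ.biUnion L} → Fin k //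
        ∀ v : V, ∃ c : ℕ, ∃ h : c ∈ L v,
          g ⟨c, Finset.mem_biUnion.mpr ⟨v, Finset.mem_univ v, h⟩⟩ = cl v} := by
  rw [Nat.card_pos_iff]
  refine ⟨?_, inferInstance⟩
  rcases isEmpty_or_nonempty V with hV | ⟨⟨v₀⟩⟩
  · exact ⟨⟨fun c => (by simpa [univ_eq_empty] using c.2 : False).elim, isEmptyElim⟩⟩
  have hk0 : 0 < k := (cl v₀).pos
  have : Nonempty (Fin k) := ⟨cl v₀⟩
  let A : V → Finset {c : ℕ // c ∈ univ.biUnion L} := fun v => (L v).subtype _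
  have hA (v : V) : #(A v) = kstar := by
    rw [card_subtype, ← hsize v]
    congr 1
    exact filter_true_of_mem fun c hc => mem_biUnion.2 ⟨v, mem_univ v, hc⟩
  obtain ⟨g, hg⟩ := exists_forall_exists_mem_apply_eq A cl hA (by
    simpa using mul_sub_one_pow_lt_pow_of_mul_log_lt hk0 hk)
  refine ⟨⟨g, fun v => ?_⟩⟩
  obtain ⟨⟨c, _⟩, hc, hgc⟩ := hg v
  exact ⟨c, mem_subtype.1 hc, hgc⟩

/-- Probabilistic lemma: if the vertices are partitioned into `k` classes by `cl`,
every list has size `k* > k · ln n`, and each color of the union of the lists is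
assigned to one of the `k` classes, then with positive probability (equivalently:
for a positive number of assignments `g` of classes to colors) every vertex `v`
retains some color of its list assigned to `v`'s class. -/
theorem exists_assignment_lists_nonempty {V : Type} [Fintype V] [DecidableEq V]
    (k : ℕ) (cl : V → Fin k) (L : V → Finset ℕ) (kstar : ℕ)
    (hsize : ∀ v : V, (L v).card = kstar)
    (hk : (k : ℝ) * Real.log (Fintype.card V) < (kstar : ℝ)) :
    0 < Nat.card {g : {c : ℕ // c ∈ Finset.univ.biUnion L} → Fin k //
        ∀ v : V, ∃ c : ℕ, ∃ h : c ∈ L v,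
          g ⟨c, Finset.mem_biUnion.mpr ⟨v, Finset.mem_univ v, h⟩⟩ = cl v} :=
  exists_assignment_lists_nonempty_general k cl L kstar hsize hk
end

section
/- For the star graph K_{1,n−1} with n > 2, the unique-maximum choice number with respect to paths satisfies ch_um(H_paths(K_{1,n−1})) ≥ n − 1, while the unique-maximum chromatic number with respect to paths satisfies χ_um(H_paths(K_{1,n−1})) = 2. -/
/-!
On the path `i – center – j` between two leaves of equal color the unique maximum can only be
the center, so once the leaves see fewer than `n - 1` colors, pigeonhole puts some leaf below the
center. This rules out any coloring from lists giving the center `1, …, n - 2` and every leaf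
`n - 1, …, 2n - 4`, and any coloring with a single color. Two colors suffice: center `2`, leaves `1`.
-/

/-- The vertex sets of simple paths in the star `K_{1,n-1}` (center `none`,
leaves `some i`): singletons, center–leaf pairs, and leaf–center–leaf triples. -/
def IsStarPath (n : ℕ) (S : Finset (Option (Fin (n - 1)))) : Prop :=
  (∃ v, S = {v}) ∨ (∃ i, S = {none, some i}) ∨
    (∃ i j, i ≠ j ∧ S = {none, some i, some j})

/-- `C` is a unique-maximum coloring of the star `K_{1,n-1}` with respect to paths. -/
def StarUM (n : ℕ) (C : Option (Fin (n - 1)) → ℕ) : Prop :=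
  ∀ S : Finset (Option (Fin (n - 1))), IsStarPath n S →
    ∃ v ∈ S, ∀ u ∈ S, u ≠ v → C u < C v

namespace StarUM

variable {n : ℕ} {C : Option (Fin (n - 1)) → ℕ}

theorem isStarPath_pair_leaves {i j : Fin (n - 1)} (hij : i ≠ j) :
    IsStarPath n {none, some i, some j} :=
  Or.inr (Or.inr ⟨i, j, hij, rfl⟩)

theorem lt_center_of_leaf_eq (hC : StarUM n C) {i j : Fin (n - 1)} (hij : i ≠ j)
    (hEq : C (some i) = C (some j)) : C (some i) < C none := by
  obtain ⟨v, hv, hmax⟩ := hC _ (isStarPath_pair_leaves hij)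
  simp only [Finset.mem_insert, Finset.mem_singleton] at hv
  rcases hv with rfl | rfl | rfl
  · exact hmax (some i) (by simp) (by simp)
  · exact absurd hEq (hmax (some j) (by simp) (by simp [hij.symm])).ne'
  · exact absurd hEq (hmax (some i) (by simp) (by simp [hij])).ne

theorem exists_leaf_lt_center (hC : StarUM n C) {T : Finset ℕ} (hT : T.card < n - 1)
    (hleaf : ∀ i, C (some i) ∈ T) : ∃ i, C (some i) < C none := by
  obtain ⟨i, -, j, -, hij, hEq⟩ := Finset.exists_ne_map_eq_of_card_lt_of_maps_to
    (s := Finset.univ) (by simpa using hT) (fun i _ => hleaf i)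
  exact ⟨i, hC.lt_center_of_leaf_eq hij hEq⟩

theorem of_leaf_lt_center (h : ∀ i, C (some i) < C none) : StarUM n C := by
  rintro S (⟨v, rfl⟩ | ⟨i, rfl⟩ | ⟨i, j, -, rfl⟩)
  · exact ⟨v, by simp, fun u hu hne => absurd (Finset.mem_singleton.1 hu) hne⟩
  all_goals
    refine ⟨none, by simp, fun u hu hne => ?_⟩
    obtain ⟨k, rfl⟩ := Option.ne_none_iff_exists'.1 hne
    exact h k

end StarUM

def starBadLists (n : ℕ) : Option (Fin (n - 1)) → Finset ℕ
  | none => Finset.Icc 1 (n - 2)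
  | some _ => Finset.Icc (n - 1) (2 * n - 4)

/-- For the star `K_{1,n-1}` with `n > 2`: the unique-maximum choice number with
respect to paths is at least `n - 1` (there are lists of size `n - 2` admitting no
unique-maximum coloring), while the unique-maximum chromatic number with respect
to paths equals 2. -/
theorem star_um_choice_vs_chromatic (n : ℕ) (hn : 2 < n) :
    (∃ L : Option (Fin (n - 1)) → Finset ℕ,
        (∀ v, n - 2 ≤ (L v).card) ∧ (∀ v, ∀ c ∈ L v, 0 < c) ∧
        ¬ ∃ C : Option (Fin (n - 1)) → ℕ, (∀ v, C v ∈ L v) ∧ StarUM n C) ∧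
    IsLeast {k : ℕ | ∃ C : Option (Fin (n - 1)) → ℕ,
        (∀ v, C v ∈ Finset.Icc 1 k) ∧ StarUM n C} 2 := by
  refine ⟨⟨starBadLists n, ?_, ?_, ?_⟩, ⟨?_, ?_⟩⟩
  · rintro (_ | _) <;> simp [starBadLists, Nat.card_Icc]; omega
  · rintro (_ | _) c hc <;> (simp [starBadLists] at hc; omega)
  · rintro ⟨C, hL, hC⟩
    obtain ⟨i, hi⟩ := hC.exists_leaf_lt_center (T := Finset.Icc (n - 1) (2 * n - 4))
      (by simp; omega) (fun i => hL (some i))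
    have hcenter : C none ≤ n - 2 := (Finset.mem_Icc.1 (hL none)).2
    have hleaf : n - 1 ≤ C (some i) := (Finset.mem_Icc.1 (hL (some i))).1
    omega
  · refine ⟨fun v => v.elim 2 fun _ => 1, ?_, StarUM.of_leaf_lt_center (by simp)⟩
    rintro (_ | _) <;> simp
  · rintro k ⟨C, hL, hC⟩
    by_contra! hk
    obtain ⟨i, hi⟩ := hC.exists_leaf_lt_center (by simp; omega) (fun i => hL (some i))
    have hcenter : C none ≤ k := (Finset.mem_Icc.1 (hL none)).2
    have hleaf : 1 ≤ C (some i) := (Finset.mem_Icc.1 (hL (some i))).1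
    omega
end
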